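/- arXiv:2101.12045 — 9 statements merged into one kernel-verified Lean document; each statement's English description precedes it below -/
import Mathlib

section
/- The category StrProf(C) of strong profunctors on a monoidal category C and strong natural transformations between them is a monoidal category, with tensor given by profunctor composition (G • F)(X,Z) = ∫^{Y} F(X,Y) × G(Y,Z) and unit the hom profunctor Hom_C. -/
open CategoryTheory MonoidalCategory

universe w v u

/-- A `Set`-valued profunctor on `C`, given by a family of sets with a dimap action. -/
structure ProfStruct (C : Type u) [Category.{v} C] (F : C → C → Type w) where
  dimap : ∀ {X X' Y Y' : C}, (X' ⟶ X) → (Y ⟶ Y') → F X Y → F X' Y'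
  dimap_id : ∀ {X Y : C} (a : F X Y), dimap (𝟙 X) (𝟙 Y) a = a
  dimap_comp : ∀ {X X' X'' Y Y' Y'' : C} (f : X' ⟶ X) (f' : X'' ⟶ X')
    (g : Y ⟶ Y') (g' : Y' ⟶ Y'') (a : F X Y),
    dimap (f' ≫ f) (g ≫ g') a = dimap f' g' (dimap f g a)

/-- A strong profunctor: a profunctor with a right strength satisfying
(di)naturality and the coherence laws w.r.t. associator and right unitor. -/
structure StrongProfStruct (C : Type u) [Category.{v} C] [MonoidalCategory C]
    (F : C → C → Type w) extends ProfStruct C F where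
  st : ∀ {X Y : C} (Z : C), F X Y → F (X ⊗ Z) (Y ⊗ Z)
  st_natural : ∀ {X X' Y Y' : C} (Z : C) (f : X' ⟶ X) (g : Y ⟶ Y') (a : F X Y),
    st Z (dimap f g a) = dimap (f ▷ Z) (g ▷ Z) (st Z a)
  st_dinatural : ∀ {X Y Z Z' : C} (h : Z ⟶ Z') (a : F X Y),
    dimap (X ◁ h) (𝟙 (Y ⊗ Z')) (st Z' a) = dimap (𝟙 (X ⊗ Z)) (Y ◁ h) (st Z a)
  st_assoc : ∀ {X Y : C} (Z Z' : C) (a : F X Y),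
    dimap (α_ X Z Z').hom (α_ Y Z Z').inv (st (Z ⊗ Z') a) = st Z' (st Z a)
  st_unit : ∀ {X Y : C} (a : F X Y),
    st (𝟙_ C) a = dimap (ρ_ X).hom (ρ_ Y).inv a

/-- An arrow on a monoidal category `C`: a monoid in strong profunctors, i.e. a
strong profunctor with `pure` and composition satisfying the arrow laws. -/
structure ArrowStruct (C : Type u) [Category.{v} C] [MonoidalCategory C]
    (F : C → C → Type w) extends StrongProfStruct C F where
  pure : ∀ {X Y : C}, (X ⟶ Y) → F X Y
  comp : ∀ {X Y Z : C}, F X Y → F Y Z → F X Z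
  pure_natural : ∀ {X X' Y Y' : C} (f : X' ⟶ X) (g : Y ⟶ Y') (h : X ⟶ Y),
    dimap f g (pure h) = pure (f ≫ h ≫ g)
  comp_dimap : ∀ {X X' Y Z Z' : C} (f : X' ⟶ X) (g : Z ⟶ Z') (a : F X Y) (b : F Y Z),
    dimap f g (comp a b) = comp (dimap f (𝟙 Y) a) (dimap (𝟙 Y) g b)
  comp_middle : ∀ {X Y Y' Z : C} (h : Y ⟶ Y') (a : F X Y) (b : F Y' Z),
    comp (dimap (𝟙 X) h a) b = comp a (dimap h (𝟙 Z) b)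
  comp_assoc : ∀ {W X Y Z : C} (a : F W X) (b : F X Y) (c : F Y Z),
    comp (comp a b) c = comp a (comp b c)
  pure_comp : ∀ {X Y : C} (a : F X Y), comp (pure (𝟙 X)) a = a
  comp_pure : ∀ {X Y : C} (a : F X Y), comp a (pure (𝟙 Y)) = a
  pure_st : ∀ {X Y : C} (Z : C) (f : X ⟶ Y), st Z (pure f) = pure (f ▷ Z)
  comp_st : ∀ {X Y Z : C} (W : C) (a : F X Y) (b : F Y Z),
    st W (comp a b) = comp (st W a) (st W b)

variable {C : Type u} [Category.{v} C] [MonoidalCategory C]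

/-- The left strength induced from the right strength via the symmetry. -/
def StrongProfStruct.lst [SymmetricCategory C] {F : C → C → Type w}
    (S : StrongProfStruct C F) {X Y : C} (Z : C) (a : F X Y) : F (Z ⊗ X) (Z ⊗ Y) :=
  S.dimap (β_ Z X).hom (β_ Y Z).hom (S.st Z a)

/-- A commutative arrow: an arrow for which the two parallel compositions,
defined via left/right strength and composition, agree. -/
structure CommArrowStruct (C : Type u) [Category.{v} C] [MonoidalCategory C]
    [SymmetricCategory C] (F : C → C → Type w) extends ArrowStruct C F where
  comm : ∀ {X Y X' Y' : C} (a : F X Y) (b : F X' Y'),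
    comp (st X' a) (StrongProfStruct.lst toStrongProfStruct Y b) =
      comp (StrongProfStruct.lst toStrongProfStruct X b) (st Y' a)

/-- Bundled strong profunctors on `C`. -/
structure StrongProf (C : Type u) [Category.{v} C] [MonoidalCategory C] :
    Type ((max u v) + 1) where
  obj : C → C → Type (max u v)
  str : StrongProfStruct C obj

/-- Strong natural transformations between strong profunctors. -/
@[ext]
structure StrongNat {C : Type u} [Category.{v} C] [MonoidalCategory C]
    (F G : StrongProf C) where
  app : ∀ (X Y : C), F.obj X Y → G.obj X Y
  natural : ∀ {X X' Y Y' : C} (f : X' ⟶ X) (g : Y ⟶ Y') (a : F.obj X Y),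
    app X' Y' (F.str.dimap f g a) = G.str.dimap f g (app X Y a)
  strong : ∀ {X Y : C} (Z : C) (a : F.obj X Y),
    app (X ⊗ Z) (Y ⊗ Z) (F.str.st Z a) = G.str.st Z (app X Y a)

/-- The category of strong profunctors and strong natural transformations. -/
instance StrongProf.category (C : Type u) [Category.{v} C] [MonoidalCategory C] :
    Category (StrongProf C) where
  Hom := StrongNat
  id F := ⟨fun _ _ a => a, fun _ _ _ => rfl, fun _ _ => rfl⟩
  comp τ σ := ⟨fun X Y a => σ.app X Y (τ.app X Y a),
    fun f g a => by (try simp only []); rw [τ.natural, σ.natural],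
    fun Z a => by (try simp only []); rw [τ.strong, σ.strong]⟩

/-- The coend formula for profunctor composition:
`(G • F)(X,Z) = ∫^Y F(X,Y) × G(Y,Z)`. -/
def ProfComp {C : Type u} [Category.{v} C] [MonoidalCategory C]
    (F G : StrongProf C) (X Z : C) : Type (max u v) :=
  Quot (fun (a b : Σ Y : C, F.obj X Y × G.obj Y Z) =>
    ∃ h : a.1 ⟶ b.1,
      b.2.1 = F.str.dimap (𝟙 X) h a.2.1 ∧ a.2.2 = G.str.dimap h (𝟙 Z) b.2.2)

/-! Elements of the coend `ProfComp F G X Z` are classes `mk Y a b`, glued by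
`mk Y a (dimap h 𝟙 b) = mk Y' (dimap 𝟙 h a) b`. All structure maps are defined on
representatives and shown to respect this gluing. The associator and the tensor of morphisms
only rebracket representatives, so naturality, the pentagon and functoriality of the tensor hold
definitionally on representatives; only the unitors, which absorb a hom-component by `dimap`,
need the gluing relation and the (di)naturality of the profunctors. -/

@[simp]
theorem ProfStruct.dimap_dimap {C : Type u} [Category.{v} C] {F : C → C → Type w}
    (S : ProfStruct C F) {X X' X'' Y Y' Y'' : C} (f : X' ⟶ X) (f' : X'' ⟶ X') (g : Y ⟶ Y')
    (g' : Y' ⟶ Y'') (a : F X Y) :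
    S.dimap f' g' (S.dimap f g a) = S.dimap (f' ≫ f) (g ≫ g') a :=
  (S.dimap_comp f f' g g' a).symm

attribute [simp] ProfStruct.dimap_id

namespace ProfComp

variable {F G : StrongProf C} {X Z : C}

def mk (Y : C) (a : F.obj X Y) (b : G.obj Y Z) : ProfComp F G X Z :=
  Quot.mk _ ⟨Y, a, b⟩

theorem sound {Y Y' : C} (h : Y ⟶ Y') (a : F.obj X Y) (b : G.obj Y' Z) :
    mk Y a (G.str.dimap h (𝟙 Z) b) = mk Y' (F.str.dimap (𝟙 X) h a) b :=
  Quot.sound ⟨h, rfl, rfl⟩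

theorem mk_eq_mk {Y Y' : C} (h : Y ⟶ Y') {a : F.obj X Y} {b : G.obj Y' Z}
    {a' : F.obj X Y'} {b' : G.obj Y Z}
    (ha : a' = F.str.dimap (𝟙 X) h a) (hb : b' = G.str.dimap h (𝟙 Z) b) :
    mk Y a b' = mk Y' a' b := by
  subst ha hb
  exact sound h a b

@[elab_as_elim]
theorem ind {P : ProfComp F G X Z → Prop} (h : ∀ Y a b, P (mk Y a b)) (q : ProfComp F G X Z) :
    P q :=
  Quot.ind (fun p => h p.1 p.2.1 p.2.2) q

def lift {T : Sort*} (f : ∀ Y, F.obj X Y → G.obj Y Z → T)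
    (hf : ∀ {Y Y'} (h : Y ⟶ Y') a b,
      f Y a (G.str.dimap h (𝟙 Z) b) = f Y' (F.str.dimap (𝟙 X) h a) b) :
    ProfComp F G X Z → T :=
  Quot.lift (fun p => f p.1 p.2.1 p.2.2) (by
    rintro ⟨Y, a, b⟩ ⟨Y', a', b'⟩ ⟨h, ha, hb⟩
    dsimp only at h ha hb ⊢
    subst ha hb
    exact hf h a b')

@[simp]
theorem lift_mk {T : Sort*} (f : ∀ Y, F.obj X Y → G.obj Y Z → T) hf (Y : C) (a : F.obj X Y)
    (b : G.obj Y Z) : lift f hf (mk Y a b) = f Y a b :=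
  rfl

variable (F G)

def strongProfStruct : StrongProfStruct C (ProfComp F G) where
  dimap f g := lift (fun Y a b => mk Y (F.str.dimap f (𝟙 Y) a) (G.str.dimap (𝟙 Y) g b))
    fun h a b => mk_eq_mk h (by simp) (by simp)
  dimap_id := by
    intro X Z q
    induction q using ind
    simp
  dimap_comp := by
    intro X X' X'' Z Z' Z'' f f' g g' q
    induction q using ind
    simp
  st W := lift (fun Y a b => mk (Y ⊗ W) (F.str.st W a) (G.str.st W b))
    fun h a b => mk_eq_mk (h ▷ W) (by simp [F.str.st_natural]) (by simp [G.str.st_natural])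
  st_natural := by
    intro X X' Z Z' W f g q
    induction q using ind
    simp [F.str.st_natural, G.str.st_natural]
  st_dinatural := by
    intro X Z W W' h q
    induction q using ind with | h Y a b => ?_
    simp only [lift_mk, ProfStruct.dimap_id, F.str.st_dinatural, ← G.str.st_dinatural]
    exact (sound (Y ◁ h) (F.str.st W a) (G.str.st W' b)).symm
  st_assoc := by
    intro X Z W W' q
    induction q using ind with | h Y a b => ?_
    refine (mk_eq_mk (α_ Y W W').hom ?_ ?_).symm
    · rw [← F.str.st_assoc]; simp
    · simp [← G.str.st_assoc]
  st_unit := by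
    intro X Z q
    induction q using ind with | h Y a b => ?_
    refine (mk_eq_mk (ρ_ Y).inv ?_ ?_).symm
    · simp [F.str.st_unit]
    · simp [G.str.st_unit]

variable {F G}

@[simp]
theorem strongProfStruct_dimap_mk {X X' Y Z Z' : C} (f : X' ⟶ X) (g : Z ⟶ Z')
    (a : F.obj X Y) (b : G.obj Y Z) :
    (strongProfStruct F G).dimap f g (mk Y a b) =
      mk Y (F.str.dimap f (𝟙 Y) a) (G.str.dimap (𝟙 Y) g b) :=
  rfl

@[simp]
theorem strongProfStruct_st_mk {X Y Z : C} (W : C) (a : F.obj X Y) (b : G.obj Y Z) :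
    (strongProfStruct F G).st W (mk Y a b) = mk (Y ⊗ W) (F.str.st W a) (G.str.st W b) :=
  rfl

end ProfComp

namespace StrongProf

open ProfComp

variable (C) in
abbrev homProf : StrongProf C where
  obj X Y := ULift.{max u v} (X ⟶ Y)
  str :=
  { dimap := fun f g k => ⟨f ≫ k.down ≫ g⟩
    dimap_id := fun _ => by simp
    dimap_comp := fun _ _ _ _ _ => by simp
    st := fun Z k => ⟨k.down ▷ Z⟩
    st_natural := fun _ _ _ _ => by simp
    st_dinatural := fun _ _ => by simp [whisker_exchange]
    st_assoc := fun _ _ _ => by simp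
    st_unit := fun _ => by simp }

/-- The tensor `A ⊗ B` is the composite in which `B` acts first. -/
abbrev tensor (A B : StrongProf C) : StrongProf C :=
  ⟨ProfComp B A, strongProfStruct B A⟩

@[ext]
theorem hom_ext {A B : StrongProf C} {σ τ : A ⟶ B}
    (h : ∀ X Y (a : A.obj X Y), σ.app X Y a = τ.app X Y a) : σ = τ :=
  StrongNat.ext (funext fun X => funext fun Y => funext (h X Y))

theorem tensor_hom_ext {A B P : StrongProf C} {σ τ : tensor A B ⟶ P}
    (h : ∀ X Y Z (b : B.obj X Y) (a : A.obj Y Z),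
      σ.app X Z (ProfComp.mk Y b a) = τ.app X Z (ProfComp.mk Y b a)) :
    σ = τ :=
  hom_ext fun X Z q => by
    induction q using ind
    apply h

def tensorHom {A A' B B' : StrongProf C} (σ : A ⟶ A') (τ : B ⟶ B') :
    tensor A B ⟶ tensor A' B' where
  app X Z := lift (fun Y b a => ProfComp.mk Y (τ.app X Y b) (σ.app Y Z a))
    fun h b a => mk_eq_mk h (τ.natural _ _ _) (σ.natural _ _ _)
  natural f g q := by
    induction q using ind
    exact congrArg₂ (ProfComp.mk _) (τ.natural _ _ _) (σ.natural _ _ _)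
  strong W q := by
    induction q using ind
    exact congrArg₂ (ProfComp.mk _) (τ.strong _ _) (σ.strong _ _)

theorem tensor_tensor_hom_ext {A B D P : StrongProf C} {σ τ : tensor (tensor A B) D ⟶ P}
    (h : ∀ X Y W Z (d : D.obj X Y) (b : B.obj Y W) (a : A.obj W Z),
      σ.app X Z (ProfComp.mk Y d (ProfComp.mk W b a)) =
        τ.app X Z (ProfComp.mk Y d (ProfComp.mk W b a))) :
    σ = τ :=
  tensor_hom_ext fun X Y Z d q => by
    induction q using ind
    apply h

section Associator

variable (A B D : StrongProf C)

def associatorHom : tensor (tensor A B) D ⟶ tensor A (tensor B D) where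
  app X Z := lift
    (fun Y d => lift (fun W b a => ProfComp.mk W (ProfComp.mk Y d b) a)
      fun h b a => mk_eq_mk h (by simp) rfl)
    fun h d q => by
      induction q using ind
      exact congrArg₂ (ProfComp.mk _) (sound h d _) (A.str.dimap_id _)
  natural f g q := by
    induction q using ind with | h Y d q => ?_
    induction q using ind
    rfl
  strong W q := by
    induction q using ind with | h Y d q => ?_
    induction q using ind
    rfl

def associatorInv : tensor A (tensor B D) ⟶ tensor (tensor A B) D where
  app X Z := lift
    (fun W q a => lift (fun Y d b => ProfComp.mk Y d (ProfComp.mk W b a))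
      (fun h d b => mk_eq_mk h rfl (by simp)) q)
    fun h q a => by
      induction q using ind
      exact congrArg₂ (ProfComp.mk _) (D.str.dimap_id _).symm (sound h _ a)
  natural f g q := by
    induction q using ind with | h W q a => ?_
    induction q using ind
    rfl
  strong W q := by
    induction q using ind with | h V q a => ?_
    induction q using ind
    rfl

def associator : tensor (tensor A B) D ≅ tensor A (tensor B D) where
  hom := associatorHom A B D
  inv := associatorInv A B D
  hom_inv_id := tensor_tensor_hom_ext fun _ _ _ _ _ _ _ => rfl
  inv_hom_id := tensor_hom_ext fun X W Z q a => by
    induction q using ind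
    rfl

end Associator

section Unitors

variable (A : StrongProf C)

def leftUnitor : tensor (homProf C) A ≅ A where
  hom :=
  { app X Z := lift (fun Y a k => A.str.dimap (𝟙 X) k.down a) fun h a k => by simp
    natural f g q := by
      induction q using ind
      simp
    strong W q := by
      induction q using ind
      simp [A.str.st_natural] }
  inv :=
  { app X Z a := ProfComp.mk Z a ⟨𝟙 Z⟩
    natural f g a := (mk_eq_mk g (by simp) (by ext; simp)).symm
    strong W a := congrArg (ProfComp.mk _ _) (by ext; simp) }
  hom_inv_id := tensor_hom_ext fun X Y Z a k => (mk_eq_mk k.down rfl (by ext; simp)).symm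
  inv_hom_id := hom_ext fun X Z a => A.str.dimap_id a

def rightUnitor : tensor A (homProf C) ≅ A where
  hom :=
  { app X Z := lift (fun Y k a => A.str.dimap k.down (𝟙 Z) a) fun h k a => by simp
    natural f g q := by
      induction q using ind
      simp
    strong W q := by
      induction q using ind
      simp [A.str.st_natural] }
  inv :=
  { app X Z a := ProfComp.mk X ⟨𝟙 X⟩ a
    natural f g a := mk_eq_mk f (by ext; simp) (by simp)
    strong W a := congrArg (ProfComp.mk _ · _) (by ext; simp) }
  hom_inv_id := tensor_hom_ext fun X Y Z k a => mk_eq_mk k.down (by ext; simp) rfl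
  inv_hom_id := hom_ext fun X Z a => A.str.dimap_id a

end Unitors

instance monoidalCategoryStruct : MonoidalCategoryStruct (StrongProf C) where
  tensorObj := tensor
  whiskerLeft A _ _ τ := tensorHom (𝟙 A) τ
  whiskerRight σ B := tensorHom σ (𝟙 B)
  tensorHom := tensorHom
  tensorUnit := homProf C
  associator := associator
  leftUnitor := leftUnitor
  rightUnitor := rightUnitor

instance monoidalCategory : MonoidalCategory (StrongProf C) :=
  .ofTensorHom
    (id_tensorHom_id := fun _ _ => tensor_hom_ext fun _ _ _ _ _ => rfl)
    (id_tensorHom := fun _ _ _ _ => rfl)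
    (tensorHom_id := fun _ _ => rfl)
    (tensorHom_comp_tensorHom := fun _ _ _ _ => tensor_hom_ext fun _ _ _ _ _ => rfl)
    (associator_naturality := fun _ _ _ => tensor_tensor_hom_ext fun _ _ _ _ _ _ _ => rfl)
    (leftUnitor_naturality := fun τ => tensor_hom_ext fun _ _ _ a k => (τ.natural _ _ a).symm)
    (rightUnitor_naturality := fun τ => tensor_hom_ext fun _ _ _ k a => (τ.natural _ _ a).symm)
    (pentagon := fun _ _ _ _ => tensor_tensor_hom_ext fun _ _ _ _ _ _ q => by
      induction q using ind
      rfl)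
    (triangle := fun _ _ => tensor_tensor_hom_ext fun _ _ _ _ b k a => (sound k.down b a).symm)

end StrongProf

/-- the category of strong profunctors on a monoidal category `C`
is monoidal, with tensor given by profunctor composition
`(G • F)(X,Z) = ∫^Y F(X,Y) × G(Y,Z)` and unit the hom profunctor. -/
theorem strongProf_monoidal (C : Type u) [Category.{v} C] [MonoidalCategory C] :
    ∃ M : MonoidalCategory (StrongProf C),
      (∀ F G : StrongProf C,
        (MonoidalCategoryStruct.tensorObj (self := M.toMonoidalCategoryStruct) G F).obj =
          fun X Z => ProfComp F G X Z) ∧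
      (MonoidalCategoryStruct.tensorUnit (self := M.toMonoidalCategoryStruct)).obj =
        fun X Y : C => ULift.{max u v} (X ⟶ Y) :=
  ⟨StrongProf.monoidalCategory, fun _ _ => rfl, rfl⟩
end

section
/- Every commutative arrow A on a symmetric monoidal category C gives rise to a symmetric monoidal category whose objects are the objects of C and whose hom-sets are A(X,Y), with composition given by the arrow composition, identities given by pure of identities, and tensor on morphisms defined via the left and right strengths; moreover there is an identity-on-objects strict monoidal functor J : C → A given by pure. -/
open CategoryTheory MonoidalCategory

universe w v u

variable {C : Type u} [Category.{v} C] [MonoidalCategory C]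

/-- The type of objects of the (symmetric monoidal) category induced by a
commutative arrow `A`: the same objects as `C`. -/
def ACat {C : Type u} [Category.{v} C] [MonoidalCategory C] [SymmetricCategory C]
    {F : C → C → Type w} (_ : CommArrowStruct C F) : Type u := C

/-!
The identities, associators, unitors and braiding of the induced category are `pure` of those
of `C`, and `pure` preserves composition and parallel composition, so every coherence axiom is
the image under `pure` of the same axiom in `C`. Each naturality axiom has the form
`a ≫ pure e' = pure e ≫ b` for isomorphisms `e, e'`, and follows from
`a = dimap e e'⁻¹ b`; these dimap identities for the left and right strengths follow from the
strong-profunctor laws and the symmetry of `C`. Commutativity of the arrow is what gives the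
interchange law `(a₁ ⊗ a₂) ≫ (b₁ ⊗ b₂) = (a₁ ≫ b₁) ⊗ (a₂ ≫ b₂)`: it swaps the middle factors
`lst a₂` and `st b₁`.
-/

namespace StrongProfStruct

variable {F : C → C → Type w} (S : StrongProfStruct C F)

lemma st_eq_dimap_st_of_iso {X Y Z Z' : C} (e : Z ≅ Z') (a : F X Y) :
    S.st Z' a = S.dimap (X ◁ e.inv) (Y ◁ e.hom) (S.st Z a) := by
  have h := congrArg (S.dimap (X ◁ e.inv) (𝟙 (Y ⊗ Z'))) (S.st_dinatural e.hom a)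
  simpa [← S.dimap_comp, S.dimap_id] using h

variable [SymmetricCategory C]

lemma lst_unit {X Y : C} (a : F X Y) :
    S.lst (𝟙_ C) a = S.dimap (λ_ X).hom (λ_ Y).inv a := by
  simp [lst, S.st_unit, ← S.dimap_comp]

lemma st_eq_dimap_lst {X Y : C} (Z : C) (a : F X Y) :
    S.st Z a = S.dimap (β_ X Z).hom (β_ Y Z).inv (S.lst Z a) := by
  simp [lst, ← S.dimap_comp, S.dimap_id]

lemma lst_eq_dimap_st {X Y : C} (Z : C) (a : F X Y) :
    S.lst Z a = S.dimap (β_ Z X).hom (β_ Z Y).inv (S.st Z a) := by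
  rw [lst, ← SymmetricCategory.braiding_swap_eq_inv_braiding]

lemma lst_tensor {X Y : C} (Z Z' : C) (a : F X Y) :
    S.lst (Z ⊗ Z') a = S.dimap (α_ Z Z' X).hom (α_ Z Z' Y).inv (S.lst Z (S.lst Z' a)) := by
  simp only [lst, S.st_natural, ← S.st_assoc, S.st_eq_dimap_st_of_iso (β_ Z Z') a, ← S.dimap_comp]
  congr 1
  · rw [BraidedCategory.braiding_tensor_right_hom]
    simp only [Category.assoc, Iso.hom_inv_id_assoc,
      ← BraidedCategory.braiding_tensor_left_hom_assoc,
      BraidedCategory.braiding_naturality_left_assoc, Iso.hom_inv_id,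
      ← whiskerLeft_comp, whiskerLeft_id, Category.comp_id]
  · rw [BraidedCategory.braiding_tensor_left_hom]
    simp only [Category.assoc, Iso.hom_inv_id, Category.comp_id,
      ← BraidedCategory.braiding_tensor_right_hom_assoc,
      BraidedCategory.braiding_naturality_right_assoc, ← comp_whiskerRight,
      SymmetricCategory.symmetry, id_whiskerRight]

lemma st_lst {X Y : C} (Z W : C) (a : F X Y) :
    S.st W (S.lst Z a) = S.dimap (α_ Z X W).hom (α_ Z Y W).inv (S.lst Z (S.st W a)) := by
  simp only [lst, S.st_natural, ← S.st_assoc, S.st_eq_dimap_st_of_iso (β_ Z W) a, ← S.dimap_comp]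
  congr 1
  · simp [BraidedCategory.braiding_tensor_right_hom]
  · simp [BraidedCategory.braiding_tensor_left_hom, ← whiskerLeft_comp_assoc]

end StrongProfStruct

namespace ArrowStruct

variable {F : C → C → Type w} (A : ArrowStruct C F)

lemma dimap_comp_left {X X' Y Z : C} (f : X' ⟶ X) (a : F X Y) (b : F Y Z) :
    A.comp (A.dimap f (𝟙 Y) a) b = A.dimap f (𝟙 Z) (A.comp a b) := by
  rw [A.comp_dimap, A.dimap_id]

lemma dimap_comp_right {X Y Z Z' : C} (g : Z ⟶ Z') (a : F X Y) (b : F Y Z) :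
    A.comp a (A.dimap (𝟙 Y) g b) = A.dimap (𝟙 X) g (A.comp a b) := by
  rw [A.comp_dimap, A.dimap_id]

lemma pure_comp_eq_dimap {X Y Z : C} (f : X ⟶ Y) (a : F Y Z) :
    A.comp (A.pure f) a = A.dimap f (𝟙 Z) a := by
  have hf : A.pure f = A.dimap f (𝟙 Y) (A.pure (𝟙 Y)) := by simp [A.pure_natural]
  rw [hf, dimap_comp_left, A.pure_comp]

lemma comp_pure_eq_dimap {X Y Z : C} (a : F X Y) (g : Y ⟶ Z) :
    A.comp a (A.pure g) = A.dimap (𝟙 X) g a := by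
  have hg : A.pure g = A.dimap (𝟙 Y) g (A.pure (𝟙 Y)) := by simp [A.pure_natural]
  rw [hg, dimap_comp_right, A.comp_pure]

lemma pure_comp_pure {X Y Z : C} (f : X ⟶ Y) (g : Y ⟶ Z) :
    A.comp (A.pure f) (A.pure g) = A.pure (f ≫ g) := by
  rw [pure_comp_eq_dimap, pure_natural, Category.comp_id]

lemma comp_pure_hom_eq_pure_hom_comp {X X' Y Y' : C} (e : X ≅ X') (e' : Y ≅ Y')
    {a : F X Y} {b : F X' Y'} (h : a = A.dimap e.hom e'.inv b) :
    A.comp a (A.pure e'.hom) = A.comp (A.pure e.hom) b := by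
  rw [h, comp_pure_eq_dimap, pure_comp_eq_dimap, ← A.dimap_comp]
  simp

variable [SymmetricCategory C]

lemma lst_pure {X Y : C} (Z : C) (f : X ⟶ Y) : A.lst Z (A.pure f) = A.pure (Z ◁ f) := by
  simp [StrongProfStruct.lst, A.pure_st, A.pure_natural]

lemma lst_comp {X Y Z : C} (W : C) (a : F X Y) (b : F Y Z) :
    A.lst W (A.comp a b) = A.comp (A.lst W a) (A.lst W b) := by
  have ha : A.lst W a = A.dimap (𝟙 _) (β_ Y W).hom (A.dimap (β_ W X).hom (𝟙 _) (A.st W a)) := by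
    simp [StrongProfStruct.lst, ← A.dimap_comp]
  rw [ha, A.comp_middle]
  simp [StrongProfStruct.lst, A.comp_st, A.comp_dimap, ← A.dimap_comp]

def tensorHom {X Y X' Y' : C} (a : F X Y) (b : F X' Y') : F (X ⊗ X') (Y ⊗ Y') :=
  A.comp (A.st X' a) (A.lst Y b)

lemma pure_tensorHom_pure {X Y X' Y' : C} (f : X ⟶ Y) (g : X' ⟶ Y') :
    A.tensorHom (A.pure f) (A.pure g) = A.pure (f ⊗ₘ g) := by
  rw [tensorHom, pure_st, lst_pure, pure_comp_pure, ← MonoidalCategory.tensorHom_def]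

lemma pure_id_tensorHom (X : C) {Y Y' : C} (b : F Y Y') :
    A.tensorHom (A.pure (𝟙 X)) b = A.lst X b := by
  rw [tensorHom, pure_st, id_whiskerRight, pure_comp]

lemma tensorHom_pure_id {X X' : C} (a : F X X') (Y : C) :
    A.tensorHom a (A.pure (𝟙 Y)) = A.st Y a := by
  rw [tensorHom, lst_pure, whiskerLeft_id, comp_pure]

lemma associator_naturality {X₁ X₂ X₃ Y₁ Y₂ Y₃ : C} (a₁ : F X₁ Y₁) (a₂ : F X₂ Y₂)
    (a₃ : F X₃ Y₃) :
    A.comp (A.tensorHom (A.tensorHom a₁ a₂) a₃) (A.pure (α_ Y₁ Y₂ Y₃).hom) =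
      A.comp (A.pure (α_ X₁ X₂ X₃).hom) (A.tensorHom a₁ (A.tensorHom a₂ a₃)) := by
  simp only [tensorHom, comp_st, lst_comp, comp_assoc]
  rw [A.comp_pure_hom_eq_pure_hom_comp _ _ (A.lst_tensor Y₁ Y₂ a₃),
    ← A.comp_assoc (A.st X₃ (A.lst Y₁ a₂)),
    A.comp_pure_hom_eq_pure_hom_comp _ _ (A.st_lst Y₁ X₃ a₂), A.comp_assoc,
    ← A.comp_assoc (A.st X₃ (A.st X₂ a₁)),
    A.comp_pure_hom_eq_pure_hom_comp _ _ (A.st_assoc X₂ X₃ a₁).symm, A.comp_assoc]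

lemma leftUnitor_naturality {X Y : C} (a : F X Y) :
    A.comp (A.tensorHom (A.pure (𝟙 (𝟙_ C))) a) (A.pure (λ_ Y).hom) =
      A.comp (A.pure (λ_ X).hom) a := by
  rw [pure_id_tensorHom]
  exact A.comp_pure_hom_eq_pure_hom_comp _ _ (A.lst_unit a)

lemma rightUnitor_naturality {X Y : C} (a : F X Y) :
    A.comp (A.tensorHom a (A.pure (𝟙 (𝟙_ C)))) (A.pure (ρ_ Y).hom) =
      A.comp (A.pure (ρ_ X).hom) a := by
  rw [tensorHom_pure_id]
  exact A.comp_pure_hom_eq_pure_hom_comp _ _ (A.st_unit a)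

lemma pure_pentagon (W X Y Z : C) :
    A.comp (A.tensorHom (A.pure (α_ W X Y).hom) (A.pure (𝟙 Z)))
        (A.comp (A.pure (α_ W (X ⊗ Y) Z).hom)
          (A.tensorHom (A.pure (𝟙 W)) (A.pure (α_ X Y Z).hom))) =
      A.comp (A.pure (α_ (W ⊗ X) Y Z).hom) (A.pure (α_ W X (Y ⊗ Z)).hom) := by
  simp only [pure_tensorHom_pure, pure_comp_pure]
  congr 1
  simp

lemma pure_triangle (X Y : C) :
    A.comp (A.pure (α_ X (𝟙_ C) Y).hom) (A.tensorHom (A.pure (𝟙 X)) (A.pure (λ_ Y).hom)) =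
      A.tensorHom (A.pure (ρ_ X).hom) (A.pure (𝟙 Y)) := by
  simp only [pure_tensorHom_pure, pure_comp_pure]
  congr 1
  simp

lemma pure_hexagon_forward (X Y Z : C) :
    A.comp (A.pure (α_ X Y Z).hom) (A.comp (A.pure (β_ X (Y ⊗ Z)).hom) (A.pure (α_ Y Z X).hom)) =
      A.comp (A.st Z (A.pure (β_ X Y).hom))
        (A.comp (A.pure (α_ Y X Z).hom) (A.lst Y (A.pure (β_ X Z).hom))) := by
  simp only [pure_st, lst_pure, pure_comp_pure, BraidedCategory.hexagon_forward]

lemma pure_hexagon_reverse (X Y Z : C) :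
    A.comp (A.pure (α_ X Y Z).inv) (A.comp (A.pure (β_ (X ⊗ Y) Z).hom) (A.pure (α_ Z X Y).inv)) =
      A.comp (A.lst X (A.pure (β_ Y Z).hom))
        (A.comp (A.pure (α_ X Z Y).inv) (A.st Y (A.pure (β_ X Z).hom))) := by
  simp only [pure_st, lst_pure, pure_comp_pure, BraidedCategory.hexagon_reverse]

end ArrowStruct

namespace CommArrowStruct

variable [SymmetricCategory C] {F : C → C → Type w} (A : CommArrowStruct C F)

lemma tensorHom_comp_tensorHom {X₁ Y₁ Z₁ X₂ Y₂ Z₂ : C} (a₁ : F X₁ Y₁) (a₂ : F X₂ Y₂)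
    (b₁ : F Y₁ Z₁) (b₂ : F Y₂ Z₂) :
    A.comp (A.tensorHom a₁ a₂) (A.tensorHom b₁ b₂) =
      A.tensorHom (A.comp a₁ b₁) (A.comp a₂ b₂) := by
  simp only [ArrowStruct.tensorHom, A.comp_st, A.lst_comp, A.comp_assoc]
  rw [← A.comp_assoc (A.lst Y₁ a₂), ← A.comm, A.comp_assoc]

instance category : Category.{w} (ACat A) where
  Hom X Y := F X Y
  id (X : C) := A.pure (𝟙 X)
  comp := A.comp
  id_comp := A.pure_comp
  comp_id := A.comp_pure
  assoc := A.comp_assoc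

def pureFunctor : C ⥤ ACat A where
  obj X := X
  map := A.pure
  map_comp f g := (A.pure_comp_pure f g).symm

instance monoidalCategoryStruct : MonoidalCategoryStruct (ACat A) where
  tensorObj X Y := (X ⊗ Y : C)
  whiskerLeft X _ _ b := A.lst X b
  whiskerRight a Y := A.st Y a
  tensorHom := A.tensorHom
  tensorUnit := (𝟙_ C : C)
  associator (X Y Z : C) := A.pureFunctor.mapIso (α_ X Y Z)
  leftUnitor (X : C) := A.pureFunctor.mapIso (λ_ X)
  rightUnitor (X : C) := A.pureFunctor.mapIso (ρ_ X)

instance monoidalCategory : MonoidalCategory (ACat A) :=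
  .ofTensorHom
    (id_tensorHom_id := fun (X Y : C) =>
      (A.pure_tensorHom_pure (𝟙 X) (𝟙 Y)).trans (congrArg A.pure (id_tensorHom_id X Y)))
    (id_tensorHom := A.pure_id_tensorHom)
    (tensorHom_id := A.tensorHom_pure_id)
    (tensorHom_comp_tensorHom := A.tensorHom_comp_tensorHom)
    (associator_naturality := A.associator_naturality)
    (leftUnitor_naturality := A.leftUnitor_naturality)
    (rightUnitor_naturality := A.rightUnitor_naturality)
    (pentagon := A.pure_pentagon)
    (triangle := A.pure_triangle)

instance symmetricCategory : SymmetricCategory (ACat A) where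
  braiding (X Y : C) := A.pureFunctor.mapIso (β_ X Y)
  braiding_naturality_left a Z := A.comp_pure_hom_eq_pure_hom_comp _ _ (A.st_eq_dimap_lst Z a)
  braiding_naturality_right X _ _ b :=
    A.comp_pure_hom_eq_pure_hom_comp _ _ (A.lst_eq_dimap_st X b)
  hexagon_forward := A.pure_hexagon_forward
  hexagon_reverse := A.pure_hexagon_reverse
  symmetry (X Y : C) :=
    (A.pure_comp_pure _ _).trans (congrArg A.pure (SymmetricCategory.symmetry X Y))

end CommArrowStruct

/-- every commutative arrow `A` on a symmetric monoidal category
`C` gives rise to a symmetric monoidal category with the objects of `C` and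
hom-sets `A(X,Y)`, composition the arrow composition, identities `pure (𝟙 X)`,
tensor on objects that of `C`; moreover there is an identity-on-objects strict
monoidal functor `J : C → A` given by `pure`. -/
theorem commArrow_gives_symmetric_monoidal_category
    {C : Type u} [Category.{v} C] [MonoidalCategory C] [SymmetricCategory C]
    {F : C → C → Type w} (A : CommArrowStruct C F) :
    ∃ (cat : Category.{w} (ACat A)) (mon : @MonoidalCategory (ACat A) cat)
      (_sym : @SymmetricCategory (ACat A) cat mon)
      (J : @CategoryTheory.Functor C _ (ACat A) cat),
      -- the hom-sets are the `A(X,Y)`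
      (@Quiver.Hom (ACat A) cat.toCategoryStruct.toQuiver = F) ∧
      -- identities are `pure` of identities
      HEq (fun X : ACat A => @CategoryStruct.id (ACat A) cat.toCategoryStruct X)
        (fun X : C => A.pure (𝟙 X)) ∧
      -- composition is the arrow composition
      HEq (fun (X Y Z : ACat A) (f : @Quiver.Hom (ACat A) cat.toCategoryStruct.toQuiver X Y)
              (g : @Quiver.Hom (ACat A) cat.toCategoryStruct.toQuiver Y Z) =>
            @CategoryStruct.comp (ACat A) cat.toCategoryStruct X Y Z f g)
        (fun (X Y Z : C) (a : F X Y) (b : F Y Z) => A.comp a b) ∧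
      -- the tensor product on objects is that of `C`, and the unit is that of `C`
      ((MonoidalCategoryStruct.tensorObj (self := mon.toMonoidalCategoryStruct)) =
        fun X Y : C => X ⊗ Y) ∧
      ((MonoidalCategoryStruct.tensorUnit (self := mon.toMonoidalCategoryStruct)) =
        (𝟙_ C : C)) ∧
      -- `J` is identity on objects and given by `pure` on morphisms
      (∀ X : C, J.obj X = X) ∧
      HEq (fun (X Y : C) (f : X ⟶ Y) => J.map f)
        (fun (X Y : C) (f : X ⟶ Y) => A.pure f) :=
  ⟨A.category, A.monoidalCategory, A.symmetricCategory, A.pureFunctor, rfl, .rfl, .rfl, rfl, rfl,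
    fun _ => rfl, .rfl⟩
end

section
/- If W is a strong comonad on a symmetric monoidal category C, then the co-Kleisli profunctor A_W(X,Y) = Hom_C(WX, Y) is an arrow on C. -/
open CategoryTheory MonoidalCategory

universe w v u

variable {C : Type u} [Category.{v} C] [MonoidalCategory C]

/-
The co-Kleisli maps `W X ⟶ Y` are the morphisms of the co-Kleisli category, with `pure` its
identities (the counit) and `comp` its composition (through the comultiplication), so the monoid
laws are the comonad laws. The strength sends `a` to `s X Z ≫ (a ▷ Z)`; the strong-profunctor
laws are those of `s` as a strength of the underlying functor, and the compatibility of the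
strength with `pure` and `comp` is the compatibility of `s` with `ε` and `δ`.
-/

namespace CategoryTheory

variable (F : C ⥤ C)

structure FunctorStrength where
  str : ∀ X Z : C, F.obj (X ⊗ Z) ⟶ F.obj X ⊗ Z
  natural : ∀ {X X' Z Z' : C} (f : X ⟶ X') (g : Z ⟶ Z'),
    F.map (f ⊗ₘ g) ≫ str X' Z' = str X Z ≫ (F.map f ⊗ₘ g)
  unitor : ∀ X : C, str X (𝟙_ C) = F.map (ρ_ X).hom ≫ (ρ_ (F.obj X)).inv
  assoc : ∀ X Z Z' : C,
    F.map (α_ X Z Z').inv ≫ str (X ⊗ Z) Z' ≫ (str X Z ▷ Z') =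
      str X (Z ⊗ Z') ≫ (α_ (F.obj X) Z Z').inv

@[simps]
def coKleisliProf : ProfStruct C (fun X Y => F.obj X ⟶ Y) where
  dimap f g a := F.map f ≫ a ≫ g
  dimap_id := by simp
  dimap_comp := by simp

namespace FunctorStrength

variable {F} (σ : FunctorStrength F)

lemma natural_whiskerRight {X X' : C} (f : X ⟶ X') (Z : C) :
    F.map (f ▷ Z) ≫ σ.str X' Z = σ.str X Z ≫ (F.map f ▷ Z) := by
  simpa using σ.natural f (𝟙 Z)

lemma natural_whiskerLeft (X : C) {Z Z' : C} (g : Z ⟶ Z') :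
    F.map (X ◁ g) ≫ σ.str X Z' = σ.str X Z ≫ (F.obj X ◁ g) := by
  simpa using σ.natural (𝟙 X) g

lemma str_tensor (X Z Z' : C) :
    σ.str (X ⊗ Z) Z' ≫ (σ.str X Z ▷ Z') =
      F.map (α_ X Z Z').hom ≫ σ.str X (Z ⊗ Z') ≫ (α_ (F.obj X) Z Z').inv := by
  rw [← σ.assoc, ← F.map_comp_assoc]
  simp

@[simps!]
def coKleisliStrongProf : StrongProfStruct C (fun X Y => F.obj X ⟶ Y) where
  toProfStruct := coKleisliProf F
  st Z a := σ.str _ Z ≫ (a ▷ Z)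
  st_natural Z f g a := by
    simp [reassoc_of% σ.natural_whiskerRight]
  st_dinatural h a := by
    simp [reassoc_of% σ.natural_whiskerLeft, whisker_exchange]
  st_assoc Z Z' a := by
    simp [reassoc_of% σ.str_tensor]
  st_unit a := by simp [σ.unitor]

end FunctorStrength

structure ComonadStrength (W : Comonad C) extends FunctorStrength W.toFunctor where
  counit : ∀ X Z : C, str X Z ≫ (W.ε.app X ▷ Z) = W.ε.app (X ⊗ Z)
  comul : ∀ X Z : C,
    W.δ.app (X ⊗ Z) ≫ W.map (str X Z) ≫ str (W.obj X) Z = str X Z ≫ (W.δ.app X ▷ Z)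

namespace ComonadStrength

variable {W : Comonad C} (σ : ComonadStrength W)

def coKleisliArrow : ArrowStruct C (fun X Y => W.obj X ⟶ Y) where
  toStrongProfStruct := σ.coKleisliStrongProf
  pure f := W.ε.app _ ≫ f
  comp a b := W.δ.app _ ≫ W.map a ≫ b
  pure_natural f g h := by simp
  comp_dimap f g a b := by simp
  comp_middle h a b := by simp
  comp_assoc a b c := congrArg Cokleisli.Hom.of <|
    Category.assoc (obj := Cokleisli W)
      (.mk a : Cokleisli.mk W _ ⟶ Cokleisli.mk W _) (.mk b) (.mk c)
  pure_comp a := by simp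
  comp_pure a := by simp
  pure_st Z f := by
    simp [reassoc_of% σ.counit]
  comp_st Z a b := by
    simp [reassoc_of% σ.natural_whiskerRight, reassoc_of% σ.comul]

end ComonadStrength

end CategoryTheory

theorem coKleisli_arrow_general {C : Type u} [Category.{v} C] [MonoidalCategory C]
    (W : Comonad C)
    (s : ∀ (X Z : C), W.obj (X ⊗ Z) ⟶ W.obj X ⊗ Z)
    (s_natural : ∀ {X X' Z Z' : C} (f : X ⟶ X') (g : Z ⟶ Z'),
      W.map (f ⊗ₘ g) ≫ s X' Z' = s X Z ≫ (W.map f ⊗ₘ g))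
    (s_counit : ∀ (X Z : C), s X Z ≫ (W.ε.app X ▷ Z) = W.ε.app (X ⊗ Z))
    (s_comul : ∀ (X Z : C),
      W.δ.app (X ⊗ Z) ≫ W.map (s X Z) ≫ s (W.obj X) Z = s X Z ≫ (W.δ.app X ▷ Z))
    (s_unitor : ∀ (X : C),
      s X (𝟙_ C) = W.map (ρ_ X).hom ≫ (ρ_ (W.obj X)).inv)
    (s_assoc : ∀ (X Z Z' : C),
      W.map (α_ X Z Z').inv ≫ s (X ⊗ Z) Z' ≫ (s X Z ▷ Z') =
        s X (Z ⊗ Z') ≫ (α_ (W.obj X) Z Z').inv) :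
    ∃ S : ArrowStruct C (fun X Y => W.obj X ⟶ Y),
      (∀ {X Y : C} (f : X ⟶ Y), S.pure f = W.ε.app X ≫ f) ∧
      (∀ {X Y Z : C} (a : W.obj X ⟶ Y) (b : W.obj Y ⟶ Z),
        S.comp a b = W.δ.app X ≫ W.map a ≫ b) ∧
      (∀ {X Y : C} (Z : C) (a : W.obj X ⟶ Y),
        S.st Z a = s X Z ≫ (a ▷ Z)) := by
  let σ : ComonadStrength W := ⟨⟨s, s_natural, s_unitor, s_assoc⟩, s_counit, s_comul⟩
  exact ⟨σ.coKleisliArrow, fun _ => rfl, fun _ _ => rfl, fun _ _ => rfl⟩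

/-- if `W` is a strong comonad on a symmetric monoidal category
`C`, then the co-Kleisli profunctor `A_W(X,Y) = Hom_C(W X, Y)` is an arrow on
`C` (with `pure` given by the counit, co-Kleisli composition, and strength
given by the comonad strength). -/
theorem coKleisli_arrow {C : Type u} [Category.{v} C] [MonoidalCategory C]
    [SymmetricCategory C] (W : Comonad C)
    (s : ∀ (X Z : C), W.obj (X ⊗ Z) ⟶ W.obj X ⊗ Z)
    (s_natural : ∀ {X X' Z Z' : C} (f : X ⟶ X') (g : Z ⟶ Z'),
      W.map (f ⊗ₘ g) ≫ s X' Z' = s X Z ≫ (W.map f ⊗ₘ g))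
    (s_counit : ∀ (X Z : C), s X Z ≫ (W.ε.app X ▷ Z) = W.ε.app (X ⊗ Z))
    (s_comul : ∀ (X Z : C),
      W.δ.app (X ⊗ Z) ≫ W.map (s X Z) ≫ s (W.obj X) Z = s X Z ≫ (W.δ.app X ▷ Z))
    (s_unitor : ∀ (X : C),
      s X (𝟙_ C) = W.map (ρ_ X).hom ≫ (ρ_ (W.obj X)).inv)
    (s_assoc : ∀ (X Z Z' : C),
      W.map (α_ X Z Z').inv ≫ s (X ⊗ Z) Z' ≫ (s X Z ▷ Z') =
        s X (Z ⊗ Z') ≫ (α_ (W.obj X) Z Z').inv) :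
    ∃ S : ArrowStruct C (fun X Y => W.obj X ⟶ Y),
      (∀ {X Y : C} (f : X ⟶ Y), S.pure f = W.ε.app X ≫ f) ∧
      (∀ {X Y Z : C} (a : W.obj X ⟶ Y) (b : W.obj Y ⟶ Z),
        S.comp a b = W.δ.app X ≫ W.map a ≫ b) ∧
      (∀ {X Y : C} (Z : C) (a : W.obj X ⟶ Y),
        S.st Z a = s X Z ≫ (a ▷ Z)) :=
  coKleisli_arrow_general W s s_natural s_counit s_comul s_unitor s_assoc
end

section
/- The functor W : Set × Set^op → Set × Set^op defined by W(X,S) = (X, X → S) is a comonad on Set × Set^op, whose co-Kleisli category is the category of lenses: objects are pairs of sets, and morphisms (X,S) → (Y,R) are pairs (f : X → Y, g : X × R → S). -/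
/-!
The first coordinate of `W` is the identity comonad, and in the second coordinate the counit and
comultiplication are precomposition with `X → 1` and with the diagonal `X → X × X`; the comonad
laws are therefore the counit and coassociativity laws of the diagonal and hold definitionally.
A co-Kleisli map `(X, X → S) ⟶ (Y, R)` is a map `X → Y` together with a map `R → (X → S)`,
which uncurries to `X × R → S`.
-/

open CategoryTheory

universe u

/-- The endofunctor `W(X,S) = (X, X → S)` on `Set × Setᵒᵖ`. -/
def WFun : Type u × (Type u)ᵒᵖ ⥤ Type u × (Type u)ᵒᵖ where
  obj P := (P.1, Opposite.op (P.1 → P.2.unop))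
  map {P Q} f :=
    (f.1, Quiver.Hom.op (TypeCat.ofHom (fun (h : Q.1 → Q.2.unop) (x : P.1) => f.2.unop (h (f.1 x)))))
  map_id P := rfl
  map_comp f g := rfl

namespace WFun

def counit : WFun.{u} ⟶ 𝟭 (Type u × (Type u)ᵒᵖ) where
  app P := (TypeCat.ofHom fun x => x, Quiver.Hom.op (TypeCat.ofHom fun (s : P.2.unop) (_ : P.1) => s))
  naturality _ _ _ := rfl

def comult : WFun.{u} ⟶ WFun ⋙ WFun where
  app P := (TypeCat.ofHom fun x => x,
    Quiver.Hom.op (TypeCat.ofHom fun (h : P.1 → P.1 → P.2.unop) (x : P.1) => h x x))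
  naturality _ _ _ := rfl

def comonad : Comonad (Type u × (Type u)ᵒᵖ) where
  toFunctor := WFun
  ε := counit
  δ := comult
  left_counit _ := rfl
  right_counit _ := rfl
  coassoc _ := rfl

abbrev Lens (X S Y R : Type u) : Type u := (X → Y) × (X × R → S)

def coKleisliHomEquivLens (X S Y R : Type u) :
    (WFun.obj (X, Opposite.op S) ⟶ (Y, Opposite.op R)) ≃ Lens X S Y R where
  toFun f := (f.1, fun p => f.2.unop p.2 p.1)
  invFun g := (TypeCat.ofHom g.1, Quiver.Hom.op (TypeCat.ofHom fun r x => g.2 (x, r)))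
  left_inv _ := rfl
  right_inv _ := rfl

end WFun

/-- `W(X,S) = (X, X → S)` is a comonad on `Set × Setᵒᵖ` (with the
indicated counit and comultiplication), whose co-Kleisli category is the
category of lenses: morphisms `(X,S) → (Y,R)` are pairs
`(f : X → Y, g : X × R → S)`. -/
theorem wfun_comonad_coKleisli_lenses :
    ∃ Wc : Comonad (Type u × (Type u)ᵒᵖ),
      Wc.toFunctor = WFun ∧
      -- the counit
      (∀ (X S : Type u),
        HEq (Wc.ε.app (X, Opposite.op S))
          ((TypeCat.ofHom (fun x => x), Quiver.Hom.op (TypeCat.ofHom (fun (s : S) (_ : X) => s))) :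
            WFun.obj (X, Opposite.op S) ⟶ (X, Opposite.op S))) ∧
      -- the comultiplication
      (∀ (X S : Type u),
        HEq (Wc.δ.app (X, Opposite.op S))
          ((TypeCat.ofHom (fun x => x), Quiver.Hom.op (TypeCat.ofHom (fun (h : X → X → S) (x : X) => h x x))) :
            WFun.obj (X, Opposite.op S) ⟶ WFun.obj (WFun.obj (X, Opposite.op S)))) ∧
      -- the co-Kleisli hom-sets are lenses
      (∀ (X S Y R : Type u),
        Nonempty ((WFun.obj (X, Opposite.op S) ⟶ (Y, Opposite.op R)) ≃
          ((X → Y) × (X × R → S)))) :=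
  ⟨WFun.comonad, rfl, fun _ _ => HEq.rfl, fun _ _ => HEq.rfl,
    fun X S Y R => ⟨WFun.coKleisliHomEquivLens X S Y R⟩⟩
end

section
/- Let A be a commutative arrow on a symmetric monoidal category C. Then Fam(A)(X,Y) = colim over the groupoid of sets and bijections of J ↦ (J → A(X,Y)) is a commutative arrow: unit given by the singleton family of pure^A, composition sending (J, F) and (K, G) to (J × K, (j,k) ↦ F(j) ;^A G(k)), and strength given by postcomposing families with st^A. -/
open CategoryTheory MonoidalCategory

universe w v u

variable {C : Type u} [Category.{v} C] [MonoidalCategory C]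

/-- The carrier of the `Fam` construction: families of elements of `F X Y`
indexed by a set, up to bijection of index sets. -/
def FamCarrier {C : Type u} [Category.{v} C] (F : C → C → Type w) (X Y : C) :
    Type (w + 1) :=
  Quot (fun (a b : Σ J : Type w, J → F X Y) => ∃ e : a.1 ≃ b.1, ∀ j, a.2 j = b.2 (e j))

/-!
Every law of a commutative arrow is an equation between composites of `dimap`, `st`, `pure` and
`comp`. In `Fam(A)` the first two act on a family pointwise, `pure` is a singleton family and
`comp` pairs up the members of two families, indexed by the product of their index sets. So each
law of `A` holds member by member in `Fam(A)` as soon as the index sets of its two sides are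
identified: by the identity for the profunctor and strength laws, and by the bijections
`(J × K) × L ≃ J × (K × L)`, `PUnit × J ≃ J ≃ J × PUnit` and `J × K ≃ K × J` for associativity,
the unit laws and commutativity. This is where the quotient by bijections of index sets is needed.
-/

def FamRel (T : Type w) (a b : Σ J : Type w, J → T) : Prop :=
  ∃ e : a.1 ≃ b.1, ∀ j, a.2 j = b.2 (e j)

/-- `FamCarrier F X Y` is `Fam (F X Y)` by definition. -/
def Fam (T : Type w) : Type (w + 1) := Quot (FamRel T)

namespace Fam

variable {T U V W : Type w}

def mk (J : Type w) (f : J → T) : Fam T := Quot.mk _ ⟨J, f⟩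

def single (t : T) : Fam T := mk PUnit fun _ => t

theorem mk_eq_mk {J K : Type w} {f : J → T} {g : K → T} (e : J ≃ K)
    (h : ∀ j, f j = g (e j)) : mk J f = mk K g :=
  Quot.sound ⟨e, h⟩

@[elab_as_elim]
theorem ind {p : Fam T → Prop} (h : ∀ J (f : J → T), p (mk J f)) (a : Fam T) : p a :=
  Quot.ind (fun x => h x.1 x.2) a

def map (φ : T → U) : Fam T → Fam U :=
  Quot.map (fun a => ⟨a.1, fun j => φ (a.2 j)⟩) fun _ _ ⟨e, h⟩ => ⟨e, fun j => congrArg φ (h j)⟩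

def map₂ (φ : T → U → V) : Fam T → Fam U → Fam V :=
  Quot.map₂ (fun a b => ⟨a.1 × b.1, fun jk => φ (a.2 jk.1) (b.2 jk.2)⟩)
    (fun a _ _ ⟨e, h⟩ => ⟨(Equiv.refl a.1).prodCongr e, fun jk => congrArg (φ _) (h jk.2)⟩)
    (fun _ _ b ⟨e, h⟩ => ⟨e.prodCongr (Equiv.refl b.1), fun jk => congrArg (φ · _) (h jk.1)⟩)

theorem map_eq_self {φ : T → T} (h : ∀ t, φ t = t) (a : Fam T) : map φ a = a :=
  ind (fun J f => congrArg (mk J) (funext fun j => h (f j))) a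

@[simp]
theorem map_map (φ : T → U) (ψ : U → V) (a : Fam T) :
    map ψ (map φ a) = map (fun t => ψ (φ t)) a :=
  ind (fun _ _ => rfl) a

@[simp]
theorem map_map₂ (φ : T → U → V) (ψ : V → W) (a : Fam T) (b : Fam U) :
    map ψ (map₂ φ a b) = map₂ (fun t u => ψ (φ t u)) a b :=
  ind (fun _ _ => ind (fun _ _ => rfl) b) a

@[simp]
theorem map₂_map_left (ψ : T → U) (φ : U → V → W) (a : Fam T) (b : Fam V) :
    map₂ φ (map ψ a) b = map₂ (fun t v => φ (ψ t) v) a b :=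
  ind (fun _ _ => ind (fun _ _ => rfl) b) a

@[simp]
theorem map₂_map_right (ψ : T → V) (φ : U → V → W) (a : Fam U) (b : Fam T) :
    map₂ φ a (map ψ b) = map₂ (fun u t => φ u (ψ t)) a b :=
  ind (fun _ _ => ind (fun _ _ => rfl) b) a

theorem map₂_single_left (φ : T → U → V) (t : T) (b : Fam U) :
    map₂ φ (single t) b = map (φ t) b :=
  ind (fun _ _ => mk_eq_mk (Equiv.punitProd _) fun _ => rfl) b

theorem map₂_single_right (φ : T → U → V) (a : Fam T) (u : U) :
    map₂ φ a (single u) = map (φ · u) a :=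
  ind (fun _ _ => mk_eq_mk (Equiv.prodPUnit _) fun _ => rfl) a

theorem map₂_swap (φ : T → U → V) (a : Fam T) (b : Fam U) :
    map₂ φ a b = map₂ (fun u t => φ t u) b a :=
  ind (fun _ _ => ind (fun _ _ => mk_eq_mk (Equiv.prodComm _ _) fun _ => rfl) b) a

theorem map₂_assoc {T₁ T₂ T₃ T₁₂ T₂₃ : Type w} {φ : T₁₂ → T₃ → V} {φ₁₂ : T₁ → T₂ → T₁₂}
    {ψ : T₁ → T₂₃ → V} {ψ₂₃ : T₂ → T₃ → T₂₃}
    (h : ∀ t₁ t₂ t₃, φ (φ₁₂ t₁ t₂) t₃ = ψ t₁ (ψ₂₃ t₂ t₃)) (a : Fam T₁) (b : Fam T₂) (c : Fam T₃) :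
    map₂ φ (map₂ φ₁₂ a b) c = map₂ ψ a (map₂ ψ₂₃ b c) :=
  ind (fun _ _ => ind (fun _ _ => ind (fun _ _ =>
    mk_eq_mk (Equiv.prodAssoc _ _ _) fun _ => h _ _ _) c) b) a

end Fam

section

variable {F : C → C → Type w}

def ProfStruct.fam (P : ProfStruct C F) : ProfStruct C (fun X Y => Fam (F X Y)) where
  dimap f g := Fam.map (P.dimap f g)
  dimap_id := Fam.map_eq_self P.dimap_id
  dimap_comp f f' g g' a := by simp only [Fam.map_map, ← P.dimap_comp]

def StrongProfStruct.fam (P : StrongProfStruct C F) :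
    StrongProfStruct C (fun X Y => Fam (F X Y)) where
  toProfStruct := P.toProfStruct.fam
  st Z := Fam.map (P.st Z)
  st_natural Z f g a := by simp only [ProfStruct.fam, Fam.map_map, P.st_natural]
  st_dinatural h a := by simp only [ProfStruct.fam, Fam.map_map, P.st_dinatural]
  st_assoc Z Z' a := by simp only [ProfStruct.fam, Fam.map_map, P.st_assoc]
  st_unit a := congrArg (Fam.map · a) (funext P.st_unit)

theorem StrongProfStruct.fam_lst [SymmetricCategory C] (P : StrongProfStruct C F) {X Y : C}
    (Z : C) (a : Fam (F X Y)) : P.fam.lst Z a = Fam.map (P.lst Z) a :=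
  Fam.map_map _ _ a

def ArrowStruct.fam (A : ArrowStruct C F) : ArrowStruct C (fun X Y => Fam (F X Y)) where
  toStrongProfStruct := A.toStrongProfStruct.fam
  pure f := Fam.single (A.pure f)
  comp := Fam.map₂ A.comp
  pure_natural f g h := congrArg Fam.single (A.pure_natural f g h)
  comp_dimap f g a b := by
    simp only [StrongProfStruct.fam, ProfStruct.fam, Fam.map_map₂, Fam.map₂_map_left,
      Fam.map₂_map_right, A.comp_dimap]
  comp_middle h a b := by
    simp only [StrongProfStruct.fam, ProfStruct.fam, Fam.map₂_map_left, Fam.map₂_map_right,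
      A.comp_middle]
  comp_assoc a b c := Fam.map₂_assoc A.comp_assoc a b c
  pure_comp a := (Fam.map₂_single_left _ _ a).trans (Fam.map_eq_self A.pure_comp a)
  comp_pure a := (Fam.map₂_single_right _ a _).trans (Fam.map_eq_self A.comp_pure a)
  pure_st Z f := congrArg Fam.single (A.pure_st Z f)
  comp_st W a b := by
    simp only [StrongProfStruct.fam, Fam.map_map₂, Fam.map₂_map_left, Fam.map₂_map_right,
      A.comp_st]

def CommArrowStruct.fam [SymmetricCategory C] (A : CommArrowStruct C F) :
    CommArrowStruct C (fun X Y => Fam (F X Y)) where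
  toArrowStruct := A.toArrowStruct.fam
  comm a b := by
    dsimp only [ArrowStruct.fam]
    rw [StrongProfStruct.fam_lst, StrongProfStruct.fam_lst]
    simp only [StrongProfStruct.fam, Fam.map₂_map_left, Fam.map₂_map_right]
    rw [Fam.map₂_swap]
    simp only [A.comm]

end

/-- for a commutative arrow `A` on a symmetric monoidal category
`C`, the profunctor `Fam(A)(X,Y) = colim_{J ∈ Set_iso} (J → A(X,Y))` is a
commutative arrow, with the singleton family of `pure` as unit, composition of
families indexed by the product of the index sets, and pointwise strength. -/
theorem fam_commutative_arrow {C : Type u} [Category.{v} C] [MonoidalCategory C]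
    [SymmetricCategory C] {FA : C → C → Type w} (A : CommArrowStruct C FA) :
    ∃ S : CommArrowStruct C (FamCarrier FA),
      -- the dimap is pointwise
      (∀ {X X' Y Y' : C} (f : X' ⟶ X) (g : Y ⟶ Y') (J : Type w) (F : J → FA X Y),
        S.dimap f g (Quot.mk _ ⟨J, F⟩) =
          Quot.mk _ ⟨J, fun j => A.dimap f g (F j)⟩) ∧
      -- the unit is the singleton family of `pure`
      (∀ {X Y : C} (f : X ⟶ Y),
        S.pure f = Quot.mk _ ⟨PUnit, fun _ => A.pure f⟩) ∧
      -- composition: `(J,F);(K,G) = (J × K, (j,k) ↦ F j ; G k)`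
      (∀ {X Y Z : C} (J : Type w) (F : J → FA X Y) (K : Type w) (G : K → FA Y Z),
        S.comp (Quot.mk _ ⟨J, F⟩) (Quot.mk _ ⟨K, G⟩) =
          Quot.mk _ ⟨J × K, fun jk => A.comp (F jk.1) (G jk.2)⟩) ∧
      -- strength: postcompose the family with the strength of `A`
      (∀ {X Y : C} (Z : C) (J : Type w) (F : J → FA X Y),
        S.st Z (Quot.mk _ ⟨J, F⟩) = Quot.mk _ ⟨J, fun j => A.st Z (F j)⟩) :=
  ⟨A.fam, fun _ _ _ _ => rfl, fun _ => rfl, fun _ _ _ _ => rfl, fun _ _ _ => rfl⟩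
end

section
/- Let A be an arrow on a monoidal category C and B a strong profunctor which is both a (×,1)-monoid in StrProf(C) and an A-bimodule whose actions preserve the monoid structure. Then A × B, defined by (A × B)(X,Y) = A(X,Y) × B(X,Y), is an arrow, with pure^{A×B} = pure^A × e and composition given by ((a,b),(a',b')) ↦ (a ;^A a', m(r(b,a'), ℓ(a,b'))). -/
open CategoryTheory MonoidalCategory

universe w v u

variable {C : Type u} [Category.{v} C] [MonoidalCategory C]

/-- A (strong) bimodule over an arrow `A`: a strong profunctor `B` with left and
right actions of `A` satisfying the left-action, right-action and
commuting-actions laws, compatibly with dimaps and strengths. -/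
structure BimoduleStruct {FA : C → C → Type w} {FB : C → C → Type w}
    (A : ArrowStruct C FA) (B : StrongProfStruct C FB) where
  actL : ∀ {X Y Z : C}, FA X Y → FB Y Z → FB X Z
  actR : ∀ {X Y Z : C}, FB X Y → FA Y Z → FB X Z
  actL_dimap : ∀ {X X' Y Z Z' : C} (f : X' ⟶ X) (g : Z ⟶ Z') (a : FA X Y) (b : FB Y Z),
    B.dimap f g (actL a b) = actL (A.dimap f (𝟙 Y) a) (B.dimap (𝟙 Y) g b)
  actL_middle : ∀ {X Y Y' Z : C} (h : Y ⟶ Y') (a : FA X Y) (b : FB Y' Z),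
    actL (A.dimap (𝟙 X) h a) b = actL a (B.dimap h (𝟙 Z) b)
  actL_pure : ∀ {X Y Z : C} (f : X ⟶ Y) (b : FB Y Z), actL (A.pure f) b = B.dimap f (𝟙 Z) b
  actL_comp : ∀ {W X Y Z : C} (a : FA W X) (a' : FA X Y) (b : FB Y Z),
    actL (A.comp a a') b = actL a (actL a' b)
  actR_dimap : ∀ {X X' Y Z Z' : C} (f : X' ⟶ X) (g : Z ⟶ Z') (b : FB X Y) (a : FA Y Z),
    B.dimap f g (actR b a) = actR (B.dimap f (𝟙 Y) b) (A.dimap (𝟙 Y) g a)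
  actR_middle : ∀ {X Y Y' Z : C} (h : Y ⟶ Y') (b : FB X Y) (a : FA Y' Z),
    actR (B.dimap (𝟙 X) h b) a = actR b (A.dimap h (𝟙 Z) a)
  actR_pure : ∀ {X Y Z : C} (b : FB X Y) (g : Y ⟶ Z), actR b (A.pure g) = B.dimap (𝟙 X) g b
  actR_comp : ∀ {W X Y Z : C} (b : FB W X) (a : FA X Y) (a' : FA Y Z),
    actR b (A.comp a a') = actR (actR b a) a'
  actLR : ∀ {W X Y Z : C} (a : FA W X) (b : FB X Y) (a' : FA Y Z),
    actR (actL a b) a' = actL a (actR b a')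
  actL_st : ∀ {X Y Z : C} (W : C) (a : FA X Y) (b : FB Y Z),
    B.st W (actL a b) = actL (A.st W a) (B.st W b)
  actR_st : ∀ {X Y Z : C} (W : C) (b : FB X Y) (a : FA Y Z),
    B.st W (actR b a) = actR (B.st W b) (A.st W a)

/-- A commutative bimodule: the mixed strength/action square commutes. -/
structure CommBimoduleStruct [SymmetricCategory C] {FA FB : C → C → Type w}
    (A : ArrowStruct C FA) (B : StrongProfStruct C FB) extends BimoduleStruct A B where
  comm : ∀ {X Y X' Y' : C} (a : FA X Y) (b : FB X' Y'),
    actL (A.st X' a) (B.lst Y b) = actR (B.lst X b) (A.st Y' a)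

/-- A `(×,1)`-monoid structure on a strong profunctor, i.e. a monoid w.r.t. the
pointwise cartesian structure on strong profunctors. -/
structure MonoidProfStruct {FB : C → C → Type w} (B : StrongProfStruct C FB) where
  e : ∀ (X Y : C), FB X Y
  m : ∀ {X Y : C}, FB X Y → FB X Y → FB X Y
  e_dimap : ∀ {X X' Y Y' : C} (f : X' ⟶ X) (g : Y ⟶ Y'), B.dimap f g (e X Y) = e X' Y'
  m_dimap : ∀ {X X' Y Y' : C} (f : X' ⟶ X) (g : Y ⟶ Y') (b b' : FB X Y),
    B.dimap f g (m b b') = m (B.dimap f g b) (B.dimap f g b')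
  m_assoc : ∀ {X Y : C} (b b' b'' : FB X Y), m (m b b') b'' = m b (m b' b'')
  m_unit_left : ∀ {X Y : C} (b : FB X Y), m (e X Y) b = b
  m_unit_right : ∀ {X Y : C} (b : FB X Y), m b (e X Y) = b
  e_st : ∀ (X Y Z : C), B.st Z (e X Y) = e (X ⊗ Z) (Y ⊗ Z)
  m_st : ∀ {X Y : C} (Z : C) (b b' : FB X Y), B.st Z (m b b') = m (B.st Z b) (B.st Z b')

/-- The actions of a bimodule preserve a `(×,1)`-monoid structure. -/
structure ActionsPreserveMonoid {FA FB : C → C → Type w} {A : ArrowStruct C FA}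
    {B : StrongProfStruct C FB} (Bi : BimoduleStruct A B) (Mo : MonoidProfStruct B) : Prop where
  actL_m : ∀ {X Y Z : C} (a : FA X Y) (b b' : FB Y Z),
    Bi.actL a (Mo.m b b') = Mo.m (Bi.actL a b) (Bi.actL a b')
  actL_e : ∀ {X Y Z : C} (a : FA X Y), Bi.actL a (Mo.e Y Z) = Mo.e X Z
  actR_m : ∀ {X Y Z : C} (b b' : FB X Y) (a : FA Y Z),
    Bi.actR (Mo.m b b') a = Mo.m (Bi.actR b a) (Bi.actR b' a)
  actR_e : ∀ {X Y Z : C} (a : FA Y Z), Bi.actR (Mo.e X Y) a = Mo.e X Z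

/-!
Everything but associativity and the unit laws holds componentwise. For associativity, once `ℓ`
and `r` are distributed over `m`, both bracketings of `(a, b) ; (a', b') ; (a'', b'')` have
`B`-component `m (r(b, a' ; a''), m (ℓ(a, r(b', a'')), ℓ(a, ℓ(a', b''))))`: the cross terms
`r(ℓ(a, b'), a'')` and `ℓ(a, r(b', a''))` agree by the commuting-actions law, and `m` is
associative. The unit laws use `r(e, a) = e`, `ℓ(a, e) = e` and the unit laws of `m`.
-/

namespace StrongProfStruct

variable {FA FB : C → C → Type w}

def prod (A : StrongProfStruct C FA) (B : StrongProfStruct C FB) :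
    StrongProfStruct C (fun X Y => FA X Y × FB X Y) where
  dimap f g p := (A.dimap f g p.1, B.dimap f g p.2)
  dimap_id p := by simp only [A.dimap_id, B.dimap_id]
  dimap_comp f f' g g' p := by simp only [A.dimap_comp, B.dimap_comp]
  st Z p := (A.st Z p.1, B.st Z p.2)
  st_natural Z f g p := by simp only [A.st_natural, B.st_natural]
  st_dinatural h p := by simp only [A.st_dinatural, B.st_dinatural]
  st_assoc Z Z' p := by simp only [A.st_assoc, B.st_assoc]
  st_unit p := by simp only [A.st_unit, B.st_unit]

end StrongProfStruct

namespace BimoduleStruct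

variable {FA FB : C → C → Type w} {A : ArrowStruct C FA} {B : StrongProfStruct C FB}
  (Bi : BimoduleStruct A B) (Mo : MonoidProfStruct B)

def prodComp {X Y Z : C} (p : FA X Y × FB X Y) (q : FA Y Z × FB Y Z) : FA X Z × FB X Z :=
  (A.comp p.1 q.1, Mo.m (Bi.actR p.2 q.1) (Bi.actL p.1 q.2))

theorem dimap_prodComp {X X' Y Z Z' : C} (f : X' ⟶ X) (g : Z ⟶ Z')
    (p : FA X Y × FB X Y) (q : FA Y Z × FB Y Z) :
    (A.prod B).dimap f g (Bi.prodComp Mo p q) =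
      Bi.prodComp Mo ((A.prod B).dimap f (𝟙 Y) p) ((A.prod B).dimap (𝟙 Y) g q) := by
  simp only [prodComp, StrongProfStruct.prod, A.comp_dimap, Mo.m_dimap, Bi.actR_dimap,
    Bi.actL_dimap]

theorem prodComp_dimap_middle {X Y Y' Z : C} (h : Y ⟶ Y')
    (p : FA X Y × FB X Y) (q : FA Y' Z × FB Y' Z) :
    Bi.prodComp Mo ((A.prod B).dimap (𝟙 X) h p) q =
      Bi.prodComp Mo p ((A.prod B).dimap h (𝟙 Z) q) := by
  simp only [prodComp, StrongProfStruct.prod, A.comp_middle, Bi.actR_middle, Bi.actL_middle]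

theorem st_prodComp {X Y Z : C} (W : C) (p : FA X Y × FB X Y) (q : FA Y Z × FB Y Z) :
    (A.prod B).st W (Bi.prodComp Mo p q) =
      Bi.prodComp Mo ((A.prod B).st W p) ((A.prod B).st W q) := by
  simp only [prodComp, StrongProfStruct.prod, A.comp_st, Mo.m_st, Bi.actR_st, Bi.actL_st]

variable {Bi Mo}

theorem prodComp_assoc (hpres : ActionsPreserveMonoid Bi Mo) {W X Y Z : C}
    (p : FA W X × FB W X) (q : FA X Y × FB X Y) (s : FA Y Z × FB Y Z) :
    Bi.prodComp Mo (Bi.prodComp Mo p q) s = Bi.prodComp Mo p (Bi.prodComp Mo q s) := by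
  obtain ⟨a, b⟩ := p
  obtain ⟨a', b'⟩ := q
  obtain ⟨a'', b''⟩ := s
  refine Prod.ext (A.comp_assoc a a' a'') ?_
  calc Mo.m (Bi.actR (Mo.m (Bi.actR b a') (Bi.actL a b')) a'') (Bi.actL (A.comp a a') b'')
      = Mo.m (Mo.m (Bi.actR b (A.comp a' a'')) (Bi.actL a (Bi.actR b' a'')))
          (Bi.actL a (Bi.actL a' b'')) := by
        rw [hpres.actR_m, Bi.actR_comp, Bi.actLR, Bi.actL_comp]
    _ = Mo.m (Bi.actR b (A.comp a' a'')) (Bi.actL a (Mo.m (Bi.actR b' a'') (Bi.actL a' b''))) := by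
        rw [Mo.m_assoc, hpres.actL_m]

theorem pure_prodComp (hpres : ActionsPreserveMonoid Bi Mo) {X Y : C} (p : FA X Y × FB X Y) :
    Bi.prodComp Mo (A.pure (𝟙 X), Mo.e X X) p = p := by
  simp only [prodComp, A.pure_comp, hpres.actR_e, Bi.actL_pure, B.dimap_id, Mo.m_unit_left]

theorem prodComp_pure (hpres : ActionsPreserveMonoid Bi Mo) {X Y : C} (p : FA X Y × FB X Y) :
    Bi.prodComp Mo p (A.pure (𝟙 Y), Mo.e Y Y) = p := by
  simp only [prodComp, A.comp_pure, hpres.actL_e, Bi.actR_pure, B.dimap_id, Mo.m_unit_right]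

def prodArrow (hpres : ActionsPreserveMonoid Bi Mo) :
    ArrowStruct C (fun X Y => FA X Y × FB X Y) where
  toStrongProfStruct := A.prod B
  pure f := (A.pure f, Mo.e _ _)
  comp := Bi.prodComp Mo
  pure_natural f g h := by simp only [StrongProfStruct.prod, A.pure_natural, Mo.e_dimap]
  comp_dimap := Bi.dimap_prodComp Mo
  comp_middle := Bi.prodComp_dimap_middle Mo
  comp_assoc := prodComp_assoc hpres
  pure_comp := pure_prodComp hpres
  comp_pure := prodComp_pure hpres
  pure_st Z f := by simp only [StrongProfStruct.prod, A.pure_st, Mo.e_st]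
  comp_st := Bi.st_prodComp Mo

end BimoduleStruct

/-- if `A` is an arrow on a monoidal category `C` and `B` is a
strong profunctor which is a `(×,1)`-monoid and an `A`-bimodule whose actions
preserve the monoid structure, then `A × B` is an arrow with
`pure = pure^A × e` and composition
`((a,b),(a',b')) ↦ (a ; a', m (r(b,a'), ℓ(a,b')))`. -/
theorem bimodule_product_arrow {C : Type u} [Category.{v} C] [MonoidalCategory C]
    {FA FB : C → C → Type w} (A : ArrowStruct C FA) (B : StrongProfStruct C FB)
    (Bi : BimoduleStruct A B) (Mo : MonoidProfStruct B)
    (_hpres : ActionsPreserveMonoid Bi Mo) :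
    ∃ S : ArrowStruct C (fun X Y => FA X Y × FB X Y),
      -- the profunctor and strength structure is componentwise
      (∀ {X X' Y Y' : C} (f : X' ⟶ X) (g : Y ⟶ Y') (p : FA X Y × FB X Y),
        S.dimap f g p = (A.dimap f g p.1, B.dimap f g p.2)) ∧
      (∀ {X Y : C} (Z : C) (p : FA X Y × FB X Y),
        S.st Z p = (A.st Z p.1, B.st Z p.2)) ∧
      -- the unit pairs `pure` with the monoid unit
      (∀ {X Y : C} (f : X ⟶ Y), S.pure f = (A.pure f, Mo.e X Y)) ∧
      -- composition combines `comp`, the two actions and the multiplication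
      (∀ {X Y Z : C} (p : FA X Y × FB X Y) (q : FA Y Z × FB Y Z),
        S.comp p q = (A.comp p.1 q.1, Mo.m (Bi.actR p.2 q.1) (Bi.actL p.1 q.2))) :=
  ⟨Bi.prodArrow _hpres, fun _ _ _ => rfl, fun _ _ => rfl, fun _ => rfl, fun _ _ => rfl⟩
end

section
/- Let A be a commutative arrow on a symmetric monoidal category C, B a context for A (commutative A-bimodule with costrength), and (M, ·, 1) a commutative monoid in Set. Then the profunctor (X,Y) ↦ M^{B(Y,X)} is a commutative A-bimodule and a commutative (×,1)-monoid in StrProf(C), with actions ℓ(a,h) = λb. h(r^B(b,a)) and r(h,a) = λb. h(ℓ^B(a,b)), monoid structure pointwise from M, and strength given by precomposition with the costrength of B. -/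
/-!
Every structure map of `(X, Y) ↦ M ^ B(Y, X)` is precomposition with a structure map of `B`
(the costrength for the strength, the right action of `B` for the left action and vice versa),
so each law is the image under `h ∘ -` of the mirror-image law of the context `B`; the monoid
structure is pointwise and is preserved by anything acting by precomposition.
-/

open CategoryTheory MonoidalCategory

universe w v u

variable {C : Type u} [Category.{v} C] [MonoidalCategory C]

/-- A bimodule over an arrow carried by a plain profunctor (no strength). -/
structure PBimoduleStruct {FA FB : C → C → Type w}
    (A : ArrowStruct C FA) (Bp : ProfStruct C FB) where
  actL : ∀ {X Y Z : C}, FA X Y → FB Y Z → FB X Z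
  actR : ∀ {X Y Z : C}, FB X Y → FA Y Z → FB X Z
  actL_dimap : ∀ {X X' Y Z Z' : C} (f : X' ⟶ X) (g : Z ⟶ Z') (a : FA X Y) (b : FB Y Z),
    Bp.dimap f g (actL a b) = actL (A.dimap f (𝟙 Y) a) (Bp.dimap (𝟙 Y) g b)
  actL_middle : ∀ {X Y Y' Z : C} (h : Y ⟶ Y') (a : FA X Y) (b : FB Y' Z),
    actL (A.dimap (𝟙 X) h a) b = actL a (Bp.dimap h (𝟙 Z) b)
  actL_pure : ∀ {X Y Z : C} (f : X ⟶ Y) (b : FB Y Z), actL (A.pure f) b = Bp.dimap f (𝟙 Z) b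
  actL_comp : ∀ {W X Y Z : C} (a : FA W X) (a' : FA X Y) (b : FB Y Z),
    actL (A.comp a a') b = actL a (actL a' b)
  actR_dimap : ∀ {X X' Y Z Z' : C} (f : X' ⟶ X) (g : Z ⟶ Z') (b : FB X Y) (a : FA Y Z),
    Bp.dimap f g (actR b a) = actR (Bp.dimap f (𝟙 Y) b) (A.dimap (𝟙 Y) g a)
  actR_middle : ∀ {X Y Y' Z : C} (h : Y ⟶ Y') (b : FB X Y) (a : FA Y' Z),
    actR (Bp.dimap (𝟙 X) h b) a = actR b (A.dimap h (𝟙 Z) a)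
  actR_pure : ∀ {X Y Z : C} (b : FB X Y) (g : Y ⟶ Z), actR b (A.pure g) = Bp.dimap (𝟙 X) g b
  actR_comp : ∀ {W X Y Z : C} (b : FB W X) (a : FA X Y) (a' : FA Y Z),
    actR b (A.comp a a') = actR (actR b a) a'
  actLR : ∀ {W X Y Z : C} (a : FA W X) (b : FB X Y) (a' : FA Y Z),
    actR (actL a b) a' = actL a (actR b a')

/-- A context for an arrow `A`: a commutative `A`-bimodule equipped with a
costrength compatible with the actions, associator and unitor. -/
structure ContextStruct [SymmetricCategory C] {FA FB : C → C → Type w}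
    (A : ArrowStruct C FA) (Bp : ProfStruct C FB) extends PBimoduleStruct A Bp where
  cst : ∀ {X Y : C} (Z : C), FB (X ⊗ Z) (Y ⊗ Z) → FB X Y
  cst_natural : ∀ {X X' Y Y' : C} (Z : C) (f : X' ⟶ X) (g : Y ⟶ Y') (b : FB (X ⊗ Z) (Y ⊗ Z)),
    cst Z (Bp.dimap (f ▷ Z) (g ▷ Z) b) = Bp.dimap f g (cst Z b)
  cst_dinatural : ∀ {X Y Z Z' : C} (h : Z ⟶ Z') (b : FB (X ⊗ Z') (Y ⊗ Z)),
    cst Z (Bp.dimap (X ◁ h) (𝟙 (Y ⊗ Z)) b) = cst Z' (Bp.dimap (𝟙 (X ⊗ Z')) (Y ◁ h) b)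
  cst_assoc : ∀ {X Y : C} (Z Z' : C) (b : FB ((X ⊗ Z) ⊗ Z') ((Y ⊗ Z) ⊗ Z')),
    cst Z (cst Z' b) = cst (Z ⊗ Z') (Bp.dimap (α_ X Z Z').inv (α_ Y Z Z').hom b)
  cst_unit : ∀ {X Y : C} (b : FB (X ⊗ 𝟙_ C) (Y ⊗ 𝟙_ C)),
    cst (𝟙_ C) b = Bp.dimap (ρ_ X).inv (ρ_ Y).hom b
  cst_actL : ∀ {X Y Z : C} (W : C) (a : FA X Y) (b : FB (Y ⊗ W) (Z ⊗ W)),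
    cst W (actL (A.st W a) b) = actL a (cst W b)
  cst_actR : ∀ {X Y Z : C} (W : C) (b : FB (X ⊗ W) (Y ⊗ W)) (a : FA Y Z),
    cst W (actR b (A.st W a)) = actR (cst W b) a
  comm : ∀ {X Y X' Y' : C} (a : FA X Y) (b : FB (Y ⊗ X') (X ⊗ Y')),
    cst X (Bp.dimap (β_ X' X).hom (β_ X Y').hom (actL (A.st X' a) b)) =
      cst Y (Bp.dimap (β_ X' Y).hom (β_ Y Y').hom (actR b (A.st Y' a)))

universe w'

namespace ProfStruct

theorem dimap_eq_dimap_snd_dimap_fst {D : Type*} [Category D] {F : D → D → Type*}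
    (P : ProfStruct D F) {X X' Y Y' : D} (f : X' ⟶ X) (g : Y ⟶ Y') (b : F X Y) :
    P.dimap f g b = P.dimap (𝟙 X') g (P.dimap f (𝟙 Y) b) := by
  rw [← P.dimap_comp, Category.id_comp, Category.id_comp]

theorem dimap_eq_dimap_fst_dimap_snd {D : Type*} [Category D] {F : D → D → Type*}
    (P : ProfStruct D F) {X X' Y Y' : D} (f : X' ⟶ X) (g : Y ⟶ Y') (b : F X Y) :
    P.dimap f g b = P.dimap f (𝟙 Y') (P.dimap (𝟙 X) g b) := by
  rw [← P.dimap_comp, Category.comp_id, Category.comp_id]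

/-- The profunctor `M ^ (F ∘ flip)`. -/
def flipPow {F : C → C → Type w} (P : ProfStruct C F) (M : Type w) :
    ProfStruct C (fun X Y => F Y X → M) where
  dimap f g h b := h (P.dimap g f b)
  dimap_id h := funext fun b => congrArg h (P.dimap_id b)
  dimap_comp f f' g g' h := funext fun b => congrArg h (P.dimap_comp g' g f' f b)

end ProfStruct

namespace ContextStruct

variable [SymmetricCategory C] {FA FB : C → C → Type w} {A : ArrowStruct C FA}
  {Bp : ProfStruct C FB} (Ct : ContextStruct A Bp) (M : Type w)

def flipPowStrong : StrongProfStruct C (fun X Y => FB Y X → M) where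
  toProfStruct := Bp.flipPow M
  st Z h b := h (Ct.cst Z b)
  st_natural Z f g h := funext fun b => congrArg h (Ct.cst_natural Z g f b).symm
  st_dinatural k h := funext fun b => congrArg h (Ct.cst_dinatural k b).symm
  st_assoc Z Z' h := funext fun b => congrArg h (Ct.cst_assoc Z Z' b).symm
  st_unit h := funext fun b => congrArg h (Ct.cst_unit b)

/-- Exponentiating reverses variance, so the right action of `B` gives the left action. -/
def flipPowBimodule : CommBimoduleStruct A (Ct.flipPowStrong M) where
  actL a h b := h (Ct.actR b a)
  actR h a b := h (Ct.actL a b)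
  actL_dimap f g a h := funext fun b => congrArg h <| by
    rw [Bp.dimap_eq_dimap_snd_dimap_fst g f, Ct.actR_middle, Ct.actR_dimap g (𝟙 _),
      A.dimap_id]
  actL_middle k a h := funext fun b => congrArg h <| by
    rw [Ct.actR_dimap (𝟙 _) k, Bp.dimap_id]
  actL_pure f h := funext fun b => congrArg h (Ct.actR_pure b f)
  actL_comp a a' h := funext fun b => congrArg h (Ct.actR_comp b a a')
  actR_dimap f g h a := funext fun b => congrArg h <| by
    rw [Ct.actL_dimap (𝟙 _) f, A.dimap_id, Ct.actL_middle,
      ← Bp.dimap_eq_dimap_fst_dimap_snd]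
  actR_middle k h a := funext fun b => congrArg h <| by
    rw [Ct.actL_dimap k (𝟙 _), Bp.dimap_id]
  actR_pure h g := funext fun b => congrArg h (Ct.actL_pure g b)
  actR_comp h a a' := funext fun b => congrArg h (Ct.actL_comp a a' b)
  actLR a h a' := funext fun b => congrArg h (Ct.actLR a' b a)
  actL_st W a h := funext fun b => congrArg h (Ct.cst_actR W b a).symm
  actR_st W h a := funext fun b => congrArg h (Ct.cst_actL W a b).symm
  comm a h := funext fun b => congrArg h (Ct.comm a b).symm

def flipPowMonoid [Monoid M] : MonoidProfStruct (Ct.flipPowStrong M) where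
  e _ _ _ := 1
  m h h' b := h b * h' b
  e_dimap _ _ := rfl
  m_dimap _ _ _ _ := rfl
  m_assoc _ _ _ := funext fun _ => mul_assoc _ _ _
  m_unit_left _ := funext fun _ => one_mul _
  m_unit_right _ := funext fun _ => mul_one _
  e_st _ _ _ := rfl
  m_st _ _ _ := rfl

theorem flipPowMonoid_m_comm [CommMonoid M] {X Y : C} (h h' : FB Y X → M) :
    (Ct.flipPowMonoid M).m h h' = (Ct.flipPowMonoid M).m h' h :=
  funext fun _ => mul_comm _ _

theorem actionsPreserveMonoid_flipPow [Monoid M] :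
    ActionsPreserveMonoid (Ct.flipPowBimodule M).toBimoduleStruct (Ct.flipPowMonoid M) :=
  ⟨fun _ _ _ => rfl, fun _ => rfl, fun _ _ _ => rfl, fun _ => rfl⟩

end ContextStruct

/-- if `A` is a commutative arrow on a symmetric monoidal
category `C`, `B` is a context for `A`, and `M` is a commutative monoid, then
`(X,Y) ↦ M^{B(Y,X)}` is a commutative `A`-bimodule and commutative
`(×,1)`-monoid, with actions given by precomposing with the actions of `B`,
pointwise monoid structure, and strength given by precomposition with the
costrength of `B`. -/
theorem M_to_the_B_flip {C : Type u} [Category.{v} C] [MonoidalCategory C]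
    [SymmetricCategory C] {FA FB : C → C → Type w} (A : CommArrowStruct C FA)
    {Bp : ProfStruct C FB} (Ct : ContextStruct A.toArrowStruct Bp)
    (M : Type w) [CommMonoid M] :
    ∃ (Bs : StrongProfStruct C (fun X Y => FB Y X → M))
      (Bi : CommBimoduleStruct A.toArrowStruct Bs)
      (Mo : MonoidProfStruct Bs),
      -- the profunctor structure: `dimap f g h = h ∘ B.dimap g f`
      (∀ {X X' Y Y' : C} (f : X' ⟶ X) (g : Y ⟶ Y') (h : FB Y X → M),
        Bs.dimap f g h = fun b => h (Bp.dimap g f b)) ∧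
      -- strength is precomposition with the costrength of `B`
      (∀ {X Y : C} (Z : C) (h : FB Y X → M),
        Bs.st Z h = fun b => h (Ct.cst Z b)) ∧
      -- actions: `ℓ(a,h) = λ b. h (r^B b a)` and `r(h,a) = λ b. h (ℓ^B a b)`
      (∀ {X Y Z : C} (a : FA X Y) (h : FB Z Y → M),
        Bi.actL a h = fun b => h (Ct.actR b a)) ∧
      (∀ {X Y Z : C} (h : FB Y X → M) (a : FA Y Z),
        Bi.actR h a = fun b => h (Ct.actL a b)) ∧
      -- the monoid structure is pointwise from `M`
      (∀ (X Y : C), Mo.e X Y = fun _ => (1 : M)) ∧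
      (∀ {X Y : C} (h h' : FB Y X → M), Mo.m h h' = fun b => h b * h' b) ∧
      -- it is a commutative monoid preserved by the actions
      (∀ {X Y : C} (h h' : FB Y X → M), Mo.m h h' = Mo.m h' h) ∧
      ActionsPreserveMonoid Bi.toBimoduleStruct Mo :=
  ⟨Ct.flipPowStrong M, Ct.flipPowBimodule M, Ct.flipPowMonoid M,
    fun _ _ _ => rfl, fun _ _ => rfl, fun _ _ => rfl, fun _ _ => rfl, fun _ _ => rfl,
    fun _ _ => rfl, Ct.flipPowMonoid_m_comm M, Ct.actionsPreserveMonoid_flipPow M⟩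
end

section
/- For every graded arrow A : P → StrProf(C) (a lax monoidal functor from a symmetric monoidal category P of grades to strong profunctors), the pointwise colimit Σ(A)(X,Y) = colim_{p ∈ P} A_p(X,Y) is an arrow on C; moreover, if A is commutative as a graded arrow, then Σ(A) is a commutative arrow. -/
/-!
The colimit over grades is the quotient of `Σ p, A_p(X,Y)` by regrading along morphisms of `P`.
Profunctor action, strength and composition are defined on representatives; they respect
regrading because `gmap` commutes with `dimap`, `st` and, on either side, `gcomp`. Every arrow
law other than associativity and the unit laws is then a graded law at a fixed grade.
Associativity and the unit laws hold in the graded arrow only after regrading along the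
associator and unitors of `P`, and the colimit identifies exactly such elements; likewise the
two parallel compositions of a commutative graded arrow differ by regrading along the braiding.
-/

open CategoryTheory MonoidalCategory

universe w v u

variable {C : Type u} [Category.{v} C] [MonoidalCategory C]

universe v₂ u₂

/-- A `P`-graded arrow on `C`: a lax monoidal functor from the symmetric monoidal
category `P` of grades to strong profunctors on `C`, presented concretely. -/
structure GradedArrowStruct (P : Type u₂) [Category.{v₂} P] [MonoidalCategory P]
    (C : Type u) [Category.{v} C] [MonoidalCategory C]
    (F : P → C → C → Type w) where
  dimap : ∀ (p : P) {X X' Y Y' : C}, (X' ⟶ X) → (Y ⟶ Y') → F p X Y → F p X' Y'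
  dimap_id : ∀ (p : P) {X Y : C} (a : F p X Y), dimap p (𝟙 X) (𝟙 Y) a = a
  dimap_comp : ∀ (p : P) {X X' X'' Y Y' Y'' : C} (f : X' ⟶ X) (f' : X'' ⟶ X')
    (g : Y ⟶ Y') (g' : Y' ⟶ Y'') (a : F p X Y),
    dimap p (f' ≫ f) (g ≫ g') a = dimap p f' g' (dimap p f g a)
  st : ∀ (p : P) {X Y : C} (Z : C), F p X Y → F p (X ⊗ Z) (Y ⊗ Z)
  st_natural : ∀ (p : P) {X X' Y Y' : C} (Z : C) (f : X' ⟶ X) (g : Y ⟶ Y') (a : F p X Y),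
    st p Z (dimap p f g a) = dimap p (f ▷ Z) (g ▷ Z) (st p Z a)
  st_dinatural : ∀ (p : P) {X Y Z Z' : C} (h : Z ⟶ Z') (a : F p X Y),
    dimap p (X ◁ h) (𝟙 (Y ⊗ Z')) (st p Z' a) = dimap p (𝟙 (X ⊗ Z)) (Y ◁ h) (st p Z a)
  st_assoc : ∀ (p : P) {X Y : C} (Z Z' : C) (a : F p X Y),
    dimap p (α_ X Z Z').hom (α_ Y Z Z').inv (st p (Z ⊗ Z') a) = st p Z' (st p Z a)
  st_unit : ∀ (p : P) {X Y : C} (a : F p X Y),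
    st p (𝟙_ C) a = dimap p (ρ_ X).hom (ρ_ Y).inv a
  gmap : ∀ {p q : P}, (p ⟶ q) → ∀ {X Y : C}, F p X Y → F q X Y
  gmap_id : ∀ (p : P) {X Y : C} (a : F p X Y), gmap (𝟙 p) a = a
  gmap_comp : ∀ {p q r : P} (h : p ⟶ q) (k : q ⟶ r) {X Y : C} (a : F p X Y),
    gmap (h ≫ k) a = gmap k (gmap h a)
  gmap_dimap : ∀ {p q : P} (h : p ⟶ q) {X X' Y Y' : C} (f : X' ⟶ X) (g : Y ⟶ Y') (a : F p X Y),
    gmap h (dimap p f g a) = dimap q f g (gmap h a)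
  gmap_st : ∀ {p q : P} (h : p ⟶ q) {X Y : C} (Z : C) (a : F p X Y),
    gmap h (st p Z a) = st q Z (gmap h a)
  gpure : ∀ {X Y : C}, (X ⟶ Y) → F (𝟙_ P) X Y
  gcomp : ∀ {p q : P} {X Y Z : C}, F p X Y → F q Y Z → F (p ⊗ q) X Z
  gpure_natural : ∀ {X X' Y Y' : C} (f : X' ⟶ X) (g : Y ⟶ Y') (h : X ⟶ Y),
    dimap (𝟙_ P) f g (gpure h) = gpure (f ≫ h ≫ g)
  gpure_st : ∀ {X Y : C} (Z : C) (f : X ⟶ Y), st (𝟙_ P) Z (gpure f) = gpure (f ▷ Z)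
  gcomp_dimap : ∀ {p q : P} {X X' Y Z Z' : C} (f : X' ⟶ X) (g : Z ⟶ Z')
    (a : F p X Y) (b : F q Y Z),
    dimap (p ⊗ q) f g (gcomp a b) = gcomp (dimap p f (𝟙 Y) a) (dimap q (𝟙 Y) g b)
  gcomp_middle : ∀ {p q : P} {X Y Y' Z : C} (h : Y ⟶ Y') (a : F p X Y) (b : F q Y' Z),
    gcomp (dimap p (𝟙 X) h a) b = gcomp a (dimap q h (𝟙 Z) b)
  gcomp_st : ∀ {p q : P} {X Y Z : C} (W : C) (a : F p X Y) (b : F q Y Z),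
    st (p ⊗ q) W (gcomp a b) = gcomp (st p W a) (st q W b)
  gcomp_gmapL : ∀ {p p' q : P} (h : p ⟶ p') {X Y Z : C} (a : F p X Y) (b : F q Y Z),
    gcomp (gmap h a) b = gmap (h ▷ q) (gcomp a b)
  gcomp_gmapR : ∀ {p q q' : P} (k : q ⟶ q') {X Y Z : C} (a : F p X Y) (b : F q Y Z),
    gcomp a (gmap k b) = gmap (p ◁ k) (gcomp a b)
  gcomp_assoc : ∀ {p q r : P} {W X Y Z : C} (a : F p W X) (b : F q X Y) (c : F r Y Z),
    gmap (α_ p q r).hom (gcomp (gcomp a b) c) = gcomp a (gcomp b c)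
  gpure_gcomp : ∀ {p : P} {X Y : C} (a : F p X Y),
    gmap (λ_ p).hom (gcomp (gpure (𝟙 X)) a) = a
  gcomp_gpure : ∀ {p : P} {X Y : C} (a : F p X Y),
    gmap (ρ_ p).hom (gcomp a (gpure (𝟙 Y))) = a

/-- The left strength of a graded arrow, via the symmetry of `C`. -/
def GradedArrowStruct.glst {P : Type u₂} [Category.{v₂} P] [MonoidalCategory P]
    {C : Type u} [Category.{v} C] [MonoidalCategory C] [SymmetricCategory C]
    {F : P → C → C → Type w} (G : GradedArrowStruct P C F)
    (p : P) {X Y : C} (Z : C) (a : F p X Y) : F p (Z ⊗ X) (Z ⊗ Y) :=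
  G.dimap p (β_ Z X).hom (β_ Y Z).hom (G.st p Z a)

/-- Commutativity of a graded arrow: the two parallel compositions agree (up to
the symmetry of the grading category). -/
def GradedArrowStruct.Commutative {P : Type u₂} [Category.{v₂} P] [MonoidalCategory P]
    [SymmetricCategory P]
    {C : Type u} [Category.{v} C] [MonoidalCategory C] [SymmetricCategory C]
    {F : P → C → C → Type w} (G : GradedArrowStruct P C F) : Prop :=
  ∀ {p q : P} {X Y X' Y' : C} (a : F p X Y) (b : F q X' Y'),
    G.gcomp (G.st p X' a) (G.glst q Y b) =
      G.gmap (β_ q p).hom (G.gcomp (G.glst q X b) (G.st p Y' a))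

/-- The carrier of the pointwise colimit of a graded arrow over its grades. -/
def HideCarrier {P : Type u₂} [Category.{v₂} P] [MonoidalCategory P]
    {C : Type u} [Category.{v} C] [MonoidalCategory C]
    {F : P → C → C → Type w} (G : GradedArrowStruct P C F) (X Y : C) :
    Type (max u₂ w) :=
  Quot (fun (a b : Σ p : P, F p X Y) => ∃ h : a.1 ⟶ b.1, G.gmap h a.2 = b.2)

namespace HideCarrier

variable {P : Type u₂} [Category.{v₂} P] [MonoidalCategory P]
  {F : P → C → C → Type w} (G : GradedArrowStruct P C F)

def dimap {X X' Y Y' : C} (f : X' ⟶ X) (g : Y ⟶ Y') :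
    HideCarrier G X Y → HideCarrier G X' Y' :=
  Quot.map (fun a => ⟨a.1, G.dimap a.1 f g a.2⟩) fun _ _ ⟨h, hab⟩ =>
    ⟨h, hab ▸ G.gmap_dimap h f g _⟩

def st {X Y : C} (Z : C) : HideCarrier G X Y → HideCarrier G (X ⊗ Z) (Y ⊗ Z) :=
  Quot.map (fun a => ⟨a.1, G.st a.1 Z a.2⟩) fun _ _ ⟨h, hab⟩ =>
    ⟨h, hab ▸ G.gmap_st h Z _⟩

def comp {X Y Z : C} : HideCarrier G X Y → HideCarrier G Y Z → HideCarrier G X Z :=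
  Quot.map₂ (fun a b => ⟨a.1 ⊗ b.1, G.gcomp a.2 b.2⟩)
    (fun a _ _ ⟨k, hb⟩ => ⟨a.1 ◁ k, hb ▸ (G.gcomp_gmapR k a.2 _).symm⟩)
    (fun _ _ b ⟨h, ha⟩ => ⟨h ▷ b.1, ha ▸ (G.gcomp_gmapL h _ b.2).symm⟩)

end HideCarrier

namespace GradedArrowStruct

variable {P : Type u₂} [Category.{v₂} P] [MonoidalCategory P]
  {F : P → C → C → Type w} (G : GradedArrowStruct P C F)

/-- `Σ(A)`: the arrow obtained by hiding the grades of `A`. -/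
def hide : ArrowStruct C (HideCarrier G) where
  dimap := HideCarrier.dimap G
  dimap_id := by
    rintro X Y ⟨⟨p, a⟩⟩
    exact congrArg _ (congrArg _ (G.dimap_id p a))
  dimap_comp := by
    rintro X X' X'' Y Y' Y'' f f' g g' ⟨⟨p, a⟩⟩
    exact congrArg _ (congrArg _ (G.dimap_comp p f f' g g' a))
  st := HideCarrier.st G
  st_natural := by
    rintro X X' Y Y' Z f g ⟨⟨p, a⟩⟩
    exact congrArg _ (congrArg _ (G.st_natural p Z f g a))
  st_dinatural := by
    rintro X Y Z Z' h ⟨⟨p, a⟩⟩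
    exact congrArg _ (congrArg _ (G.st_dinatural p h a))
  st_assoc := by
    rintro X Y Z Z' ⟨⟨p, a⟩⟩
    exact congrArg _ (congrArg _ (G.st_assoc p Z Z' a))
  st_unit := by
    rintro X Y ⟨⟨p, a⟩⟩
    exact congrArg _ (congrArg _ (G.st_unit p a))
  pure f := Quot.mk _ ⟨𝟙_ P, G.gpure f⟩
  comp := HideCarrier.comp G
  pure_natural f g h := congrArg _ (congrArg _ (G.gpure_natural f g h))
  comp_dimap := by
    rintro X X' Y Z Z' f g ⟨⟨p, a⟩⟩ ⟨⟨q, b⟩⟩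
    exact congrArg _ (congrArg _ (G.gcomp_dimap f g a b))
  comp_middle := by
    rintro X Y Y' Z h ⟨⟨p, a⟩⟩ ⟨⟨q, b⟩⟩
    exact congrArg _ (congrArg _ (G.gcomp_middle h a b))
  comp_assoc := by
    rintro W X Y Z ⟨⟨p, a⟩⟩ ⟨⟨q, b⟩⟩ ⟨⟨r, c⟩⟩
    exact Quot.sound ⟨(α_ p q r).hom, G.gcomp_assoc a b c⟩
  pure_comp := by
    rintro X Y ⟨⟨p, a⟩⟩
    exact Quot.sound ⟨(λ_ p).hom, G.gpure_gcomp a⟩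
  comp_pure := by
    rintro X Y ⟨⟨p, a⟩⟩
    exact Quot.sound ⟨(ρ_ p).hom, G.gcomp_gpure a⟩
  pure_st Z f := congrArg _ (congrArg _ (G.gpure_st Z f))
  comp_st := by
    rintro X Y Z W ⟨⟨p, a⟩⟩ ⟨⟨q, b⟩⟩
    exact congrArg _ (congrArg _ (G.gcomp_st W a b))

def hideComm [SymmetricCategory P] [SymmetricCategory C] (hG : G.Commutative) :
    CommArrowStruct C (HideCarrier G) where
  __ := G.hide
  comm := by
    rintro X Y X' Y' ⟨⟨p, a⟩⟩ ⟨⟨q, b⟩⟩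
    exact (Quot.sound ⟨(β_ q p).hom, (hG a b).symm⟩).symm

end GradedArrowStruct

/-- for every graded arrow `A : P → StrProf(C)`, the pointwise
colimit `Σ(A)(X,Y) = colim_p A_p(X,Y)` is an arrow on `C`; moreover, if `A` is
commutative as a graded arrow, then `Σ(A)` is a commutative arrow. -/
theorem hide_graded_arrow {P : Type u₂} [Category.{v₂} P] [MonoidalCategory P]
    [SymmetricCategory P] {C : Type u} [Category.{v} C] [MonoidalCategory C]
    [SymmetricCategory C] {F : P → C → C → Type w}
    (G : GradedArrowStruct P C F) :
    (∃ S : ArrowStruct C (HideCarrier G),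
      (∀ {X X' Y Y' : C} (f : X' ⟶ X) (g : Y ⟶ Y') (p : P) (a : F p X Y),
        S.dimap f g (Quot.mk _ ⟨p, a⟩) = Quot.mk _ ⟨p, G.dimap p f g a⟩) ∧
      (∀ {X Y : C} (f : X ⟶ Y), S.pure f = Quot.mk _ ⟨𝟙_ P, G.gpure f⟩) ∧
      (∀ {X Y Z : C} (p q : P) (a : F p X Y) (b : F q Y Z),
        S.comp (Quot.mk _ ⟨p, a⟩) (Quot.mk _ ⟨q, b⟩) =
          Quot.mk _ ⟨p ⊗ q, G.gcomp a b⟩) ∧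
      (∀ {X Y : C} (Z : C) (p : P) (a : F p X Y),
        S.st Z (Quot.mk _ ⟨p, a⟩) = Quot.mk _ ⟨p, G.st p Z a⟩)) ∧
    (G.Commutative →
      ∃ S : CommArrowStruct C (HideCarrier G),
        (∀ {X X' Y Y' : C} (f : X' ⟶ X) (g : Y ⟶ Y') (p : P) (a : F p X Y),
          S.dimap f g (Quot.mk _ ⟨p, a⟩) = Quot.mk _ ⟨p, G.dimap p f g a⟩) ∧
        (∀ {X Y : C} (f : X ⟶ Y), S.pure f = Quot.mk _ ⟨𝟙_ P, G.gpure f⟩) ∧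
        (∀ {X Y Z : C} (p q : P) (a : F p X Y) (b : F q Y Z),
          S.comp (Quot.mk _ ⟨p, a⟩) (Quot.mk _ ⟨q, b⟩) =
            Quot.mk _ ⟨p ⊗ q, G.gcomp a b⟩) ∧
        (∀ {X Y : C} (Z : C) (p : P) (a : F p X Y),
          S.st Z (Quot.mk _ ⟨p, a⟩) = Quot.mk _ ⟨p, G.st p Z a⟩)) := by
  refine ⟨⟨G.hide, fun _ _ _ _ => rfl, fun _ => rfl, fun _ _ _ _ => rfl, fun _ _ _ => rfl⟩,
    fun hG => ⟨G.hideComm hG, fun _ _ _ _ => rfl, fun _ => rfl, fun _ _ _ _ => rfl,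
      fun _ _ _ => rfl⟩⟩
end

section
/- Assume A : P → StrProf(C) is a commutative graded arrow and B : P → StrProf(C) is a commutative graded A-bimodule such that each B_p is a commutative (×,1)-monoid preserved by the actions. Then the pointwise product A × B : P → StrProf(C), (A×B)_p(X,Y) = A_p(X,Y) × B_p(X,Y), is a commutative graded arrow. -/
open CategoryTheory MonoidalCategory

universe w v u

variable {C : Type u} [Category.{v} C] [MonoidalCategory C]

universe v₂ u₂

/-- A graded bimodule over a graded arrow `G`: a family of strong profunctors
with graded left and right actions, natural in the grades. -/
structure GradedBimoduleStruct {P : Type u₂} [Category.{v₂} P] [MonoidalCategory P]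
    {C : Type u} [Category.{v} C] [MonoidalCategory C]
    {FA : P → C → C → Type w} (G : GradedArrowStruct P C FA)
    (FB : P → C → C → Type w) where
  dimap : ∀ (p : P) {X X' Y Y' : C}, (X' ⟶ X) → (Y ⟶ Y') → FB p X Y → FB p X' Y'
  dimap_id : ∀ (p : P) {X Y : C} (b : FB p X Y), dimap p (𝟙 X) (𝟙 Y) b = b
  dimap_comp : ∀ (p : P) {X X' X'' Y Y' Y'' : C} (f : X' ⟶ X) (f' : X'' ⟶ X')
    (g : Y ⟶ Y') (g' : Y' ⟶ Y'') (b : FB p X Y),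
    dimap p (f' ≫ f) (g ≫ g') b = dimap p f' g' (dimap p f g b)
  st : ∀ (p : P) {X Y : C} (Z : C), FB p X Y → FB p (X ⊗ Z) (Y ⊗ Z)
  st_natural : ∀ (p : P) {X X' Y Y' : C} (Z : C) (f : X' ⟶ X) (g : Y ⟶ Y') (b : FB p X Y),
    st p Z (dimap p f g b) = dimap p (f ▷ Z) (g ▷ Z) (st p Z b)
  st_dinatural : ∀ (p : P) {X Y Z Z' : C} (h : Z ⟶ Z') (b : FB p X Y),
    dimap p (X ◁ h) (𝟙 (Y ⊗ Z')) (st p Z' b) = dimap p (𝟙 (X ⊗ Z)) (Y ◁ h) (st p Z b)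
  st_assoc : ∀ (p : P) {X Y : C} (Z Z' : C) (b : FB p X Y),
    dimap p (α_ X Z Z').hom (α_ Y Z Z').inv (st p (Z ⊗ Z') b) = st p Z' (st p Z b)
  st_unit : ∀ (p : P) {X Y : C} (b : FB p X Y),
    st p (𝟙_ C) b = dimap p (ρ_ X).hom (ρ_ Y).inv b
  bmap : ∀ {p q : P}, (p ⟶ q) → ∀ {X Y : C}, FB p X Y → FB q X Y
  bmap_id : ∀ (p : P) {X Y : C} (b : FB p X Y), bmap (𝟙 p) b = b
  bmap_comp : ∀ {p q r : P} (h : p ⟶ q) (k : q ⟶ r) {X Y : C} (b : FB p X Y),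
    bmap (h ≫ k) b = bmap k (bmap h b)
  bmap_dimap : ∀ {p q : P} (h : p ⟶ q) {X X' Y Y' : C} (f : X' ⟶ X) (g : Y ⟶ Y') (b : FB p X Y),
    bmap h (dimap p f g b) = dimap q f g (bmap h b)
  bmap_st : ∀ {p q : P} (h : p ⟶ q) {X Y : C} (Z : C) (b : FB p X Y),
    bmap h (st p Z b) = st q Z (bmap h b)
  actL : ∀ {p q : P} {X Y Z : C}, FA p X Y → FB q Y Z → FB (p ⊗ q) X Z
  actR : ∀ {p q : P} {X Y Z : C}, FB p X Y → FA q Y Z → FB (p ⊗ q) X Z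
  actL_dimap : ∀ {p q : P} {X X' Y Z Z' : C} (f : X' ⟶ X) (g : Z ⟶ Z')
    (a : FA p X Y) (b : FB q Y Z),
    dimap (p ⊗ q) f g (actL a b) = actL (G.dimap p f (𝟙 Y) a) (dimap q (𝟙 Y) g b)
  actL_middle : ∀ {p q : P} {X Y Y' Z : C} (h : Y ⟶ Y') (a : FA p X Y) (b : FB q Y' Z),
    actL (G.dimap p (𝟙 X) h a) b = actL a (dimap q h (𝟙 Z) b)
  actL_gmap : ∀ {p p' q : P} (h : p ⟶ p') {X Y Z : C} (a : FA p X Y) (b : FB q Y Z),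
    actL (G.gmap h a) b = bmap (h ▷ q) (actL a b)
  actL_bmap : ∀ {p q q' : P} (k : q ⟶ q') {X Y Z : C} (a : FA p X Y) (b : FB q Y Z),
    actL a (bmap k b) = bmap (p ◁ k) (actL a b)
  actL_pure : ∀ {q : P} {X Y Z : C} (f : X ⟶ Y) (b : FB q Y Z),
    actL (G.gpure f) b = bmap (λ_ q).inv (dimap q f (𝟙 Z) b)
  actL_comp : ∀ {p p' q : P} {W X Y Z : C} (a : FA p W X) (a' : FA p' X Y) (b : FB q Y Z),
    bmap (α_ p p' q).hom (actL (G.gcomp a a') b) = actL a (actL a' b)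
  actR_dimap : ∀ {p q : P} {X X' Y Z Z' : C} (f : X' ⟶ X) (g : Z ⟶ Z')
    (b : FB p X Y) (a : FA q Y Z),
    dimap (p ⊗ q) f g (actR b a) = actR (dimap p f (𝟙 Y) b) (G.dimap q (𝟙 Y) g a)
  actR_middle : ∀ {p q : P} {X Y Y' Z : C} (h : Y ⟶ Y') (b : FB p X Y) (a : FA q Y' Z),
    actR (dimap p (𝟙 X) h b) a = actR b (G.dimap q h (𝟙 Z) a)
  actR_bmap : ∀ {p p' q : P} (h : p ⟶ p') {X Y Z : C} (b : FB p X Y) (a : FA q Y Z),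
    actR (bmap h b) a = bmap (h ▷ q) (actR b a)
  actR_gmap : ∀ {p q q' : P} (k : q ⟶ q') {X Y Z : C} (b : FB p X Y) (a : FA q Y Z),
    actR b (G.gmap k a) = bmap (p ◁ k) (actR b a)
  actR_pure : ∀ {p : P} {X Y Z : C} (b : FB p X Y) (g : Y ⟶ Z),
    actR b (G.gpure g) = bmap (ρ_ p).inv (dimap p (𝟙 X) g b)
  actR_comp : ∀ {p q q' : P} {W X Y Z : C} (b : FB p W X) (a : FA q X Y) (a' : FA q' Y Z),
    bmap (α_ p q q').inv (actR b (G.gcomp a a')) = actR (actR b a) a'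
  actLR : ∀ {p q r : P} {W X Y Z : C} (a : FA p W X) (b : FB q X Y) (a' : FA r Y Z),
    bmap (α_ p q r).hom (actR (actL a b) a') = actL a (actR b a')
  actL_st : ∀ {p q : P} {X Y Z : C} (W : C) (a : FA p X Y) (b : FB q Y Z),
    st (p ⊗ q) W (actL a b) = actL (G.st p W a) (st q W b)
  actR_st : ∀ {p q : P} {X Y Z : C} (W : C) (b : FB p X Y) (a : FA q Y Z),
    st (p ⊗ q) W (actR b a) = actR (st p W b) (G.st q W a)

/-- The left strength of a graded bimodule, via the symmetry of `C`. -/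
def GradedBimoduleStruct.blst {P : Type u₂} [Category.{v₂} P] [MonoidalCategory P]
    {C : Type u} [Category.{v} C] [MonoidalCategory C] [SymmetricCategory C]
    {FA : P → C → C → Type w} {G : GradedArrowStruct P C FA} {FB : P → C → C → Type w}
    (B : GradedBimoduleStruct G FB)
    (p : P) {X Y : C} (Z : C) (b : FB p X Y) : FB p (Z ⊗ X) (Z ⊗ Y) :=
  B.dimap p (β_ Z X).hom (β_ Y Z).hom (B.st p Z b)

/-- Commutativity of a graded bimodule. -/
def GradedBimoduleStruct.Commutative {P : Type u₂} [Category.{v₂} P] [MonoidalCategory P]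
    [SymmetricCategory P]
    {C : Type u} [Category.{v} C] [MonoidalCategory C] [SymmetricCategory C]
    {FA : P → C → C → Type w} {G : GradedArrowStruct P C FA} {FB : P → C → C → Type w}
    (B : GradedBimoduleStruct G FB) : Prop :=
  ∀ {p q : P} {X Y X' Y' : C} (a : FA p X Y) (b : FB q X' Y'),
    B.actL (G.st p X' a) (B.blst q Y b) =
      B.bmap (β_ q p).hom (B.actR (B.blst q X b) (G.st p Y' a))

/-- A pointwise `(×,1)`-monoid structure on a graded bimodule. -/
structure GradedMonoidProfStruct {P : Type u₂} [Category.{v₂} P] [MonoidalCategory P]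
    {C : Type u} [Category.{v} C] [MonoidalCategory C]
    {FA : P → C → C → Type w} {G : GradedArrowStruct P C FA} {FB : P → C → C → Type w}
    (B : GradedBimoduleStruct G FB) where
  e : ∀ (p : P) (X Y : C), FB p X Y
  m : ∀ {p : P} {X Y : C}, FB p X Y → FB p X Y → FB p X Y
  e_dimap : ∀ (p : P) {X X' Y Y' : C} (f : X' ⟶ X) (g : Y ⟶ Y'),
    B.dimap p f g (e p X Y) = e p X' Y'
  m_dimap : ∀ (p : P) {X X' Y Y' : C} (f : X' ⟶ X) (g : Y ⟶ Y') (b b' : FB p X Y),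
    B.dimap p f g (m b b') = m (B.dimap p f g b) (B.dimap p f g b')
  e_bmap : ∀ {p q : P} (h : p ⟶ q) (X Y : C), B.bmap h (e p X Y) = e q X Y
  m_bmap : ∀ {p q : P} (h : p ⟶ q) {X Y : C} (b b' : FB p X Y),
    B.bmap h (m b b') = m (B.bmap h b) (B.bmap h b')
  m_assoc : ∀ {p : P} {X Y : C} (b b' b'' : FB p X Y), m (m b b') b'' = m b (m b' b'')
  m_unit_left : ∀ {p : P} {X Y : C} (b : FB p X Y), m (e p X Y) b = b
  m_unit_right : ∀ {p : P} {X Y : C} (b : FB p X Y), m b (e p X Y) = b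
  e_st : ∀ (p : P) (X Y Z : C), B.st p Z (e p X Y) = e p (X ⊗ Z) (Y ⊗ Z)
  m_st : ∀ (p : P) {X Y : C} (Z : C) (b b' : FB p X Y),
    B.st p Z (m b b') = m (B.st p Z b) (B.st p Z b')

/-- The graded actions preserve the pointwise monoid structure. -/
structure GradedActionsPreserveMonoid {P : Type u₂} [Category.{v₂} P] [MonoidalCategory P]
    {C : Type u} [Category.{v} C] [MonoidalCategory C]
    {FA : P → C → C → Type w} {G : GradedArrowStruct P C FA} {FB : P → C → C → Type w}
    {B : GradedBimoduleStruct G FB} (Mo : GradedMonoidProfStruct B) : Prop where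
  actL_m : ∀ {p q : P} {X Y Z : C} (a : FA p X Y) (b b' : FB q Y Z),
    B.actL a (Mo.m b b') = Mo.m (B.actL a b) (B.actL a b')
  actL_e : ∀ {p q : P} {X Y Z : C} (a : FA p X Y),
    B.actL a (Mo.e q Y Z) = Mo.e (p ⊗ q) X Z
  actR_m : ∀ {p q : P} {X Y Z : C} (b b' : FB p X Y) (a : FA q Y Z),
    B.actR (Mo.m b b') a = Mo.m (B.actR b a) (B.actR b' a)
  actR_e : ∀ {p q : P} {X Y Z : C} (a : FA q Y Z),
    B.actR (Mo.e p X Y) a = Mo.e (p ⊗ q) X Z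

/-! The product `A × B` is the graded analogue of the trivial (square-zero) extension of a ring by
a bimodule: `(a, b) ⋅ (a', b') = (a a', b a' + a b')`, with the monoid `(m, e)` of `B` playing the
role of addition. Associativity then comes from the bimodule laws together with distributivity of
the actions over `m`, the unit laws from `e` being absorbing for the actions, and commutativity
from the commutativity of `A`, of `B` and of `m`. -/

namespace GradedBimoduleStruct

variable {P : Type u₂} [Category.{v₂} P] [MonoidalCategory P] {FA FB : P → C → C → Type w}
  {G : GradedArrowStruct P C FA} (B : GradedBimoduleStruct G FB)

lemma actR_dimap_dimap {p q : P} {X₁ X₂ M₁ M₂ N₁ Y₁ Y₂ : C}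
    (f : X₂ ⟶ X₁) (g : M₁ ⟶ M₂) (h : M₂ ⟶ N₁) (k : Y₁ ⟶ Y₂)
    (b : FB p X₁ M₁) (a : FA q N₁ Y₁) :
    B.actR (B.dimap p f g b) (G.dimap q h k a) =
      B.dimap (p ⊗ q) f k (B.actR b (G.dimap q (g ≫ h) (𝟙 _) a)) := by
  have hb : B.dimap p f g b = B.dimap p f (𝟙 _) (B.dimap p (𝟙 _) g b) := by
    rw [← B.dimap_comp]; simp only [Category.comp_id]
  have ha : G.dimap q h k a = G.dimap q (𝟙 _) k (G.dimap q h (𝟙 _) a) := by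
    rw [← G.dimap_comp]; simp only [Category.id_comp]
  rw [hb, ha, ← B.actR_dimap, B.actR_middle, ← G.dimap_comp, Category.id_comp]

lemma actL_dimap_dimap {p q : P} {X₁ X₂ M₁ M₂ N₁ Y₁ Y₂ : C}
    (f : X₂ ⟶ X₁) (g : M₁ ⟶ M₂) (h : M₂ ⟶ N₁) (k : Y₁ ⟶ Y₂)
    (a : FA p X₁ M₁) (b : FB q N₁ Y₁) :
    B.actL (G.dimap p f g a) (B.dimap q h k b) =
      B.dimap (p ⊗ q) f k (B.actL a (B.dimap q (g ≫ h) (𝟙 _) b)) := by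
  have ha : G.dimap p f g a = G.dimap p f (𝟙 _) (G.dimap p (𝟙 _) g a) := by
    rw [← G.dimap_comp]; simp only [Category.comp_id]
  have hb : B.dimap q h k b = B.dimap q (𝟙 _) k (B.dimap q h (𝟙 _) b) := by
    rw [← B.dimap_comp]; simp only [Category.id_comp]
  rw [ha, hb, ← B.actL_dimap, B.actL_middle, ← B.dimap_comp, Category.id_comp]

variable [SymmetricCategory C]

lemma st_eq_dimap_blst (p : P) {X Y : C} (Z : C) (b : FB p X Y) :
    B.st p Z b = B.dimap p (β_ X Z).hom (β_ Z Y).hom (B.blst p Z b) := by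
  rw [blst, ← B.dimap_comp, SymmetricCategory.symmetry, SymmetricCategory.symmetry, B.dimap_id]

/-- Commutativity of `B` with the roles of the arrow and the bimodule exchanged. -/
lemma actR_st_glst [SymmetricCategory P] {B : GradedBimoduleStruct G FB} (hB : B.Commutative)
    {p q : P} {X Y X' Y' : C} (b : FB p X Y) (a : FA q X' Y') :
    B.actR (B.st p X' b) (G.glst q Y a) =
      B.bmap (β_ q p).hom (B.actL (G.glst q X a) (B.st p Y' b)) := by
  rw [st_eq_dimap_blst, st_eq_dimap_blst, GradedArrowStruct.glst, GradedArrowStruct.glst,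
    actR_dimap_dimap, actL_dimap_dimap, SymmetricCategory.symmetry, SymmetricCategory.symmetry,
    G.dimap_id, B.dimap_id, hB, B.bmap_dimap, ← B.bmap_comp, SymmetricCategory.symmetry,
    B.bmap_id]

end GradedBimoduleStruct

namespace GradedMonoidProfStruct

variable {P : Type u₂} [Category.{v₂} P] [MonoidalCategory P] {FA FB : P → C → C → Type w}
  {G : GradedArrowStruct P C FA} {B : GradedBimoduleStruct G FB} (Mo : GradedMonoidProfStruct B)

/-- The `B`-component `b a' + a b'` of the composite of `(a, b)` and `(a', b')`. -/
def prodComp {p q : P} {X Y Z : C} (a : FA p X Y) (b : FB p X Y) (a' : FA q Y Z)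
    (b' : FB q Y Z) : FB (p ⊗ q) X Z :=
  Mo.m (B.actR b a') (B.actL a b')

lemma dimap_prodComp {p q : P} {X X' Y Z Z' : C} (f : X' ⟶ X) (g : Z ⟶ Z')
    (a : FA p X Y) (b : FB p X Y) (a' : FA q Y Z) (b' : FB q Y Z) :
    B.dimap (p ⊗ q) f g (Mo.prodComp a b a' b') =
      Mo.prodComp (G.dimap p f (𝟙 Y) a) (B.dimap p f (𝟙 Y) b)
        (G.dimap q (𝟙 Y) g a') (B.dimap q (𝟙 Y) g b') := by
  rw [prodComp, prodComp, Mo.m_dimap, B.actR_dimap, B.actL_dimap]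

lemma prodComp_dimap_middle {p q : P} {X Y Y' Z : C} (h : Y ⟶ Y')
    (a : FA p X Y) (b : FB p X Y) (a' : FA q Y' Z) (b' : FB q Y' Z) :
    Mo.prodComp (G.dimap p (𝟙 X) h a) (B.dimap p (𝟙 X) h b) a' b' =
      Mo.prodComp a b (G.dimap q h (𝟙 Z) a') (B.dimap q h (𝟙 Z) b') := by
  rw [prodComp, prodComp, B.actR_middle, B.actL_middle]

lemma st_prodComp {p q : P} {X Y Z : C} (W : C)
    (a : FA p X Y) (b : FB p X Y) (a' : FA q Y Z) (b' : FB q Y Z) :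
    B.st (p ⊗ q) W (Mo.prodComp a b a' b') =
      Mo.prodComp (G.st p W a) (B.st p W b) (G.st q W a') (B.st q W b') := by
  rw [prodComp, prodComp, Mo.m_st, B.actR_st, B.actL_st]

lemma prodComp_gmap_left {p p' q : P} (h : p ⟶ p') {X Y Z : C}
    (a : FA p X Y) (b : FB p X Y) (a' : FA q Y Z) (b' : FB q Y Z) :
    Mo.prodComp (G.gmap h a) (B.bmap h b) a' b' = B.bmap (h ▷ q) (Mo.prodComp a b a' b') := by
  rw [prodComp, prodComp, B.actR_bmap, B.actL_gmap, Mo.m_bmap]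

lemma prodComp_gmap_right {p q q' : P} (k : q ⟶ q') {X Y Z : C}
    (a : FA p X Y) (b : FB p X Y) (a' : FA q Y Z) (b' : FB q Y Z) :
    Mo.prodComp a b (G.gmap k a') (B.bmap k b') = B.bmap (p ◁ k) (Mo.prodComp a b a' b') := by
  rw [prodComp, prodComp, B.actR_gmap, B.actL_bmap, Mo.m_bmap]

variable {Mo}

lemma bmap_prodComp_assoc (hpres : GradedActionsPreserveMonoid Mo) {p q r : P} {W X Y Z : C}
    (a : FA p W X) (b : FB p W X) (a' : FA q X Y) (b' : FB q X Y)
    (a'' : FA r Y Z) (b'' : FB r Y Z) :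
    B.bmap (α_ p q r).hom (Mo.prodComp (G.gcomp a a') (Mo.prodComp a b a' b') a'' b'') =
      Mo.prodComp a b (G.gcomp a' a'') (Mo.prodComp a' b' a'' b'') := by
  rw [prodComp, prodComp, prodComp, prodComp, Mo.m_bmap, hpres.actR_m, Mo.m_bmap,
    B.actL_comp, B.actLR, ← B.actR_comp, ← B.bmap_comp, Iso.inv_hom_id, B.bmap_id,
    Mo.m_assoc, hpres.actL_m]

lemma bmap_gpure_prodComp (hpres : GradedActionsPreserveMonoid Mo) {p : P} {X Y : C}
    (a : FA p X Y) (b : FB p X Y) :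
    B.bmap (λ_ p).hom (Mo.prodComp (G.gpure (𝟙 X)) (Mo.e (𝟙_ P) X X) a b) = b := by
  rw [prodComp, hpres.actR_e, B.actL_pure, B.dimap_id, Mo.m_bmap, Mo.e_bmap, ← B.bmap_comp,
    Iso.inv_hom_id, B.bmap_id, Mo.m_unit_left]

lemma bmap_prodComp_gpure (hpres : GradedActionsPreserveMonoid Mo) {p : P} {X Y : C}
    (a : FA p X Y) (b : FB p X Y) :
    B.bmap (ρ_ p).hom (Mo.prodComp a b (G.gpure (𝟙 Y)) (Mo.e (𝟙_ P) Y Y)) = b := by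
  rw [prodComp, hpres.actL_e, B.actR_pure, B.dimap_id, Mo.m_bmap, Mo.e_bmap, ← B.bmap_comp,
    Iso.inv_hom_id, B.bmap_id, Mo.m_unit_right]

lemma prodComp_comm [SymmetricCategory P] [SymmetricCategory C] (hB : B.Commutative)
    (hMoComm : ∀ {p : P} {X Y : C} (b b' : FB p X Y), Mo.m b b' = Mo.m b' b)
    {p q : P} {X Y X' Y' : C} (a : FA p X Y) (b : FB p X Y) (a' : FA q X' Y') (b' : FB q X' Y') :
    Mo.prodComp (G.st p X' a) (B.st p X' b) (G.glst q Y a') (B.blst q Y b') =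
      B.bmap (β_ q p).hom
        (Mo.prodComp (G.glst q X a') (B.blst q X b') (G.st p Y' a) (B.st p Y' b)) := by
  rw [prodComp, prodComp, Mo.m_bmap, ← hB, ← B.actR_st_glst hB, hMoComm]

variable (Mo)

def prodArrow (hpres : GradedActionsPreserveMonoid Mo) :
    GradedArrowStruct P C (fun p X Y => FA p X Y × FB p X Y) where
  dimap p _ _ _ _ f g c := (G.dimap p f g c.1, B.dimap p f g c.2)
  dimap_id p _ _ c := Prod.ext (G.dimap_id p c.1) (B.dimap_id p c.2)
  dimap_comp p _ _ _ _ _ _ f f' g g' c :=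
    Prod.ext (G.dimap_comp p f f' g g' c.1) (B.dimap_comp p f f' g g' c.2)
  st p _ _ Z c := (G.st p Z c.1, B.st p Z c.2)
  st_natural p _ _ _ _ Z f g c := Prod.ext (G.st_natural p Z f g c.1) (B.st_natural p Z f g c.2)
  st_dinatural p _ _ _ _ h c := Prod.ext (G.st_dinatural p h c.1) (B.st_dinatural p h c.2)
  st_assoc p _ _ Z Z' c := Prod.ext (G.st_assoc p Z Z' c.1) (B.st_assoc p Z Z' c.2)
  st_unit p _ _ c := Prod.ext (G.st_unit p c.1) (B.st_unit p c.2)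
  gmap h _ _ c := (G.gmap h c.1, B.bmap h c.2)
  gmap_id p _ _ c := Prod.ext (G.gmap_id p c.1) (B.bmap_id p c.2)
  gmap_comp h k _ _ c := Prod.ext (G.gmap_comp h k c.1) (B.bmap_comp h k c.2)
  gmap_dimap h _ _ _ _ f g c := Prod.ext (G.gmap_dimap h f g c.1) (B.bmap_dimap h f g c.2)
  gmap_st h _ _ Z c := Prod.ext (G.gmap_st h Z c.1) (B.bmap_st h Z c.2)
  gpure f := (G.gpure f, Mo.e (𝟙_ P) _ _)
  gcomp c d := (G.gcomp c.1 d.1, Mo.prodComp c.1 c.2 d.1 d.2)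
  gpure_natural f g h := Prod.ext (G.gpure_natural f g h) (Mo.e_dimap (𝟙_ P) f g)
  gpure_st Z f := Prod.ext (G.gpure_st Z f) (Mo.e_st (𝟙_ P) _ _ Z)
  gcomp_dimap f g c d :=
    Prod.ext (G.gcomp_dimap f g c.1 d.1) (Mo.dimap_prodComp f g c.1 c.2 d.1 d.2)
  gcomp_middle h c d :=
    Prod.ext (G.gcomp_middle h c.1 d.1) (Mo.prodComp_dimap_middle h c.1 c.2 d.1 d.2)
  gcomp_st W c d := Prod.ext (G.gcomp_st W c.1 d.1) (Mo.st_prodComp W c.1 c.2 d.1 d.2)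
  gcomp_gmapL h _ _ _ c d :=
    Prod.ext (G.gcomp_gmapL h c.1 d.1) (Mo.prodComp_gmap_left h c.1 c.2 d.1 d.2)
  gcomp_gmapR k _ _ _ c d :=
    Prod.ext (G.gcomp_gmapR k c.1 d.1) (Mo.prodComp_gmap_right k c.1 c.2 d.1 d.2)
  gcomp_assoc c d e :=
    Prod.ext (G.gcomp_assoc c.1 d.1 e.1) (bmap_prodComp_assoc hpres c.1 c.2 d.1 d.2 e.1 e.2)
  gpure_gcomp c := Prod.ext (G.gpure_gcomp c.1) (bmap_gpure_prodComp hpres c.1 c.2)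
  gcomp_gpure c := Prod.ext (G.gcomp_gpure c.1) (bmap_prodComp_gpure hpres c.1 c.2)

lemma prodArrow_commutative [SymmetricCategory P] [SymmetricCategory C]
    (hpres : GradedActionsPreserveMonoid Mo) (hG : G.Commutative) (hB : B.Commutative)
    (hMoComm : ∀ {p : P} {X Y : C} (b b' : FB p X Y), Mo.m b b' = Mo.m b' b) :
    (Mo.prodArrow hpres).Commutative := fun c d =>
  Prod.ext (hG c.1 d.1) (prodComp_comm hB hMoComm c.1 c.2 d.1 d.2)

end GradedMonoidProfStruct

/-- if `A` is a commutative graded arrow and `B` a commutative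
graded `A`-bimodule such that each `B_p` is a commutative `(×,1)`-monoid
preserved by the actions, then the pointwise product `A × B` is a commutative
graded arrow. -/
theorem graded_bimodule_product_arrow {P : Type u₂} [Category.{v₂} P]
    [MonoidalCategory P] [SymmetricCategory P]
    {C : Type u} [Category.{v} C] [MonoidalCategory C] [SymmetricCategory C]
    {FA FB : P → C → C → Type w} (G : GradedArrowStruct P C FA)
    (hG : G.Commutative) (B : GradedBimoduleStruct G FB) (hB : B.Commutative)
    (Mo : GradedMonoidProfStruct B)
    (hMoComm : ∀ {p : P} {X Y : C} (b b' : FB p X Y), Mo.m b b' = Mo.m b' b)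
    (_hpres : GradedActionsPreserveMonoid Mo) :
    ∃ S : GradedArrowStruct P C (fun p X Y => FA p X Y × FB p X Y),
      S.Commutative ∧
      (∀ (p : P) {X X' Y Y' : C} (f : X' ⟶ X) (g : Y ⟶ Y')
          (c : FA p X Y × FB p X Y),
        S.dimap p f g c = (G.dimap p f g c.1, B.dimap p f g c.2)) ∧
      (∀ (p : P) {X Y : C} (Z : C) (c : FA p X Y × FB p X Y),
        S.st p Z c = (G.st p Z c.1, B.st p Z c.2)) ∧
      (∀ {p q : P} (h : p ⟶ q) {X Y : C} (c : FA p X Y × FB p X Y),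
        S.gmap h c = (G.gmap h c.1, B.bmap h c.2)) ∧
      (∀ {X Y : C} (f : X ⟶ Y), S.gpure f = (G.gpure f, Mo.e (𝟙_ P) X Y)) ∧
      (∀ {p q : P} {X Y Z : C} (c : FA p X Y × FB p X Y) (d : FA q Y Z × FB q Y Z),
        S.gcomp c d = (G.gcomp c.1 d.1, Mo.m (B.actR c.2 d.1) (B.actL c.1 d.2))) := by
  exact ⟨Mo.prodArrow _hpres, Mo.prodArrow_commutative _hpres hG hB hMoComm,
    fun _ _ _ _ _ _ _ _ => rfl, fun _ _ _ _ _ => rfl, fun _ _ _ _ => rfl, fun _ => rfl,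
    fun _ _ => rfl⟩
end
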